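/- arXiv:2511.03083 — 5 statements merged into one kernel-verified Lean document; each statement's English description precedes it below -/
import Mathlib

section
/- Let $(\Omega, P)$ be a finite probability space, let $V = (V_1, \dots, V_n)$ be a random variable whose distribution $P_V$ is a product distribution $P_{V_1} \times \dots \times P_{V_n}$, and let $F$ be an event with $P[F] > 0$. Then $\frac{1}{n} \sum_{i=1}^n \| P_{V_i | F} - P_{V_i} \|_1 \le \sqrt{\frac{2}{n} \log_2 \frac{1}{P[F]}}$. -/
/-!
Conditioning on `F` multiplies densities by at most `1 / P[F]`, so the relative entropy of the
conditioned law of `V` to `P_V` is at most `log (1 / P[F])`. Because `P_V` is the product of its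
marginals, this relative entropy is the sum of the coordinatewise ones `D(P_{Vᵢ|F} ‖ P_{Vᵢ})`
plus `D(P_{V|F} ‖ ∏ᵢ P_{Vᵢ|F}) ≥ 0`. Pinsker's inequality `‖p - q‖₁² ≤ 2 D(p ‖ q)` in each
coordinate and Cauchy–Schwarz over the `n` coordinates give the bound even with `log` in place
of `log₂`.
-/

open Finset Real InformationTheory

noncomputable section

def pushforward {Ω β : Type*} [Fintype Ω] [DecidableEq β] (f : Ω → β) (w : Ω → ℝ) (b : β) : ℝ :=
  ∑ ω ∈ univ.filter (fun ω => f ω = b), w ω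

def conditional {Ω : Type*} [DecidableEq Ω] (P : Ω → ℝ) (F : Finset Ω) (ω : Ω) : ℝ :=
  if ω ∈ F then P ω / ∑ ω' ∈ F, P ω' else 0

/-- Relative entropy in nats. A term with `q x = 0 < p x` contributes the junk value `0`
instead of `∞`, so the lemmas below assume `q x = 0 → p x = 0`. -/
def relEntropy {β : Type*} [Fintype β] (p q : β → ℝ) : ℝ :=
  ∑ x, p x * log (p x / q x)

end

section Pushforward

variable {Ω β γ : Type*} [Fintype Ω] [DecidableEq β] (f : Ω → β) (w : Ω → ℝ)

theorem pushforward_nonneg {w : Ω → ℝ} (hw : ∀ ω, 0 ≤ w ω) (b : β) : 0 ≤ pushforward f w b :=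
  sum_nonneg fun ω _ => hw ω

theorem pushforward_le_const_mul {w w' : Ω → ℝ} {K : ℝ} (h : ∀ ω, w ω ≤ K * w' ω) (b : β) :
    pushforward f w b ≤ K * pushforward f w' b := by
  rw [pushforward, pushforward, mul_sum]
  exact sum_le_sum fun ω _ => h ω

theorem le_pushforward_apply {w : Ω → ℝ} (hw : ∀ ω, 0 ≤ w ω) (ω : Ω) :
    w ω ≤ pushforward f w (f ω) :=
  single_le_sum (fun ω _ => hw ω) (mem_filter.2 ⟨mem_univ ω, rfl⟩)

variable [Fintype β]

theorem sum_pushforward_mul (g : β → ℝ) :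
    ∑ b, pushforward f w b * g b = ∑ ω, w ω * g (f ω) := by
  classical
  simp_rw [pushforward, sum_mul]
  rw [← sum_fiberwise univ f (fun ω => w ω * g (f ω))]
  refine sum_congr rfl fun b _ => sum_congr rfl fun ω hω => ?_
  rw [(mem_filter.1 hω).2]

theorem sum_pushforward : ∑ b, pushforward f w b = ∑ ω, w ω := by
  simpa using sum_pushforward_mul f w 1

theorem pushforward_pushforward [DecidableEq γ] (g : β → γ) :
    pushforward g (pushforward f w) = pushforward (g ∘ f) w := by
  classical
  funext c
  have h := sum_pushforward_mul f w (fun b => if g b = c then 1 else 0)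
  simpa [pushforward, sum_filter] using h

end Pushforward

section Conditional

variable {Ω : Type*} [DecidableEq Ω] {P : Ω → ℝ} {F : Finset Ω}

theorem conditional_nonneg (hP : ∀ ω, 0 ≤ P ω) (ω : Ω) : 0 ≤ conditional P F ω := by
  unfold conditional
  split_ifs
  · exact div_nonneg (hP ω) (sum_nonneg fun ω _ => hP ω)
  · exact le_rfl

theorem conditional_le (hP : ∀ ω, 0 ≤ P ω) (ω : Ω) :
    conditional P F ω ≤ (1 / ∑ ω ∈ F, P ω) * P ω := by
  unfold conditional
  split_ifs
  · rw [one_div_mul_eq_div]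
  · exact mul_nonneg (one_div_nonneg.2 (sum_nonneg fun ω _ => hP ω)) (hP ω)

variable [Fintype Ω]

theorem pushforward_conditional {β : Type*} [DecidableEq β] (f : Ω → β) (b : β) :
    pushforward f (conditional P F) b
      = (∑ ω ∈ F.filter (fun ω => f ω = b), P ω) / ∑ ω ∈ F, P ω := by
  classical
  simp only [pushforward, conditional, sum_div, sum_ite_mem, ← filter_mem_eq_inter, filter_filter]
  congr 1
  ext ω
  simp [and_comm]

theorem sum_conditional (hF : ∑ ω ∈ F, P ω ≠ 0) : ∑ ω, conditional P F ω = 1 := by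
  classical
  simp [conditional, ← sum_div, div_self hF]

end Conditional

theorem isMinOn_one_of_hasDerivAt {f f' : ℝ → ℝ} (hf : ∀ t, 0 < t → HasDerivAt f (f' t) t)
    (hf' : ∀ t, 0 < t → 0 ≤ (t - 1) * f' t) : IsMinOn f (Set.Ioi 0) 1 := by
  intro t (ht : 0 < t)
  rcases le_total t 1 with h | h
  · have hanti : AntitoneOn f (Set.Ioc 0 1) := by
      refine antitoneOn_of_hasDerivWithinAt_nonpos (f' := f') (convex_Ioc 0 1)
        (fun s hs => (hf s hs.1).continuousAt.continuousWithinAt)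
        (fun s hs => ?_) (fun s hs => ?_) <;> rw [interior_Ioc] at hs
      · exact (hf s hs.1).hasDerivWithinAt
      · exact nonpos_of_mul_nonneg_right (hf' s hs.1) (by linarith [hs.2])
    exact hanti ⟨ht, h⟩ ⟨one_pos, le_rfl⟩ h
  · have hmono : MonotoneOn f (Set.Ici 1) := by
      refine monotoneOn_of_hasDerivWithinAt_nonneg (f' := f') (convex_Ici 1)
        (fun s (hs : 1 ≤ s) => (hf s (by linarith)).continuousAt.continuousWithinAt)
        (fun s hs => ?_) (fun s hs => ?_) <;> rw [interior_Ici] at hs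
      · exact (hf s (one_pos.trans hs)).hasDerivWithinAt
      · exact nonneg_of_mul_nonneg_right (hf' s (one_pos.trans hs)) (by linarith [hs.out])
    exact hmono Set.self_mem_Ici h h

theorem monotoneOn_add_one_mul_log_sub :
    MonotoneOn (fun t => (t + 1) * log t - 2 * (t - 1)) (Set.Ioi 0) := by
  have hderiv : ∀ t, 0 < t →
      HasDerivAt (fun t => (t + 1) * log t - 2 * (t - 1)) (log t + t⁻¹ - 1) t := by
    intro t ht
    refine ((((hasDerivAt_id' t).add_const 1).mul (hasDerivAt_log ht.ne')).sub
      (((hasDerivAt_id' t).sub_const 1).const_mul 2)).congr_deriv ?_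
    field_simp
    ring
  refine monotoneOn_of_hasDerivWithinAt_nonneg (f' := fun t => log t + t⁻¹ - 1) (convex_Ioi 0)
    (fun t ht => (hderiv t ht).continuousAt.continuousWithinAt)
    (fun t ht => ?_) (fun t ht => ?_) <;> rw [interior_Ioi] at ht
  · exact (hderiv t ht).hasDerivWithinAt
  · linarith [one_sub_inv_le_log_of_pos ht.out]

theorem three_mul_sq_sub_one_le_mul_klFun {t : ℝ} (ht : 0 ≤ t) :
    3 * (t - 1) ^ 2 ≤ (2 * t + 4) * klFun t := by
  rcases ht.eq_or_lt with rfl | ht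
  · norm_num [klFun_zero]
  have hmin : IsMinOn (fun t => (2 * t + 4) * klFun t - 3 * (t - 1) ^ 2) (Set.Ioi 0) 1 := by
    refine isMinOn_one_of_hasDerivAt
      (f' := fun t => 4 * ((t + 1) * log t - 2 * (t - 1))) (fun s hs => ?_) (fun s hs => ?_)
    · refine ((((hasDerivAt_id' s).const_mul 2).add_const 4).mul (hasDerivAt_klFun hs.ne')).sub
        ((((hasDerivAt_id' s).sub_const 1).pow 2).const_mul 3) |>.congr_deriv ?_
      rw [klFun_apply]
      ring
    · have hmono := monotoneOn_add_one_mul_log_sub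
      rcases le_total s 1 with h | h
      · have := hmono hs (Set.mem_Ioi.2 one_pos) h
        simp only [log_one] at this
        nlinarith
      · have := hmono (Set.mem_Ioi.2 one_pos) hs h
        simp only [log_one] at this
        nlinarith
  simpa [klFun_one] using hmin (Set.mem_Ioi.2 ht)

theorem mul_klFun_div {a b : ℝ} (hb : b ≠ 0) : b * klFun (a / b) = a * log (a / b) - a + b := by
  rw [klFun_apply]
  field_simp
  ring

theorem three_mul_sq_sub_le {a b : ℝ} (ha : 0 ≤ a) (hb : 0 ≤ b) (hab : b = 0 → a = 0) :
    3 * (a - b) ^ 2 ≤ (2 * a + 4 * b) * (a * log (a / b) - a + b) := by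
  rcases hb.eq_or_lt with rfl | hb
  · simp [hab rfl]
  have key := three_mul_sq_sub_one_le_mul_klFun (div_nonneg ha hb.le)
  rw [← mul_klFun_div hb.ne']
  have hscale : 3 * (a - b) ^ 2 = b ^ 2 * (3 * (a / b - 1) ^ 2) := by field_simp
  have hscale' : (2 * a + 4 * b) * (b * klFun (a / b))
      = b ^ 2 * ((2 * (a / b) + 4) * klFun (a / b)) := by
    field_simp
  rw [hscale, hscale']
  exact mul_le_mul_of_nonneg_left key (sq_nonneg b)

theorem sub_le_mul_log_div {a b : ℝ} (ha : 0 ≤ a) (hb : 0 ≤ b) (hab : b = 0 → a = 0) :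
    a - b ≤ a * log (a / b) := by
  rcases hb.eq_or_lt with rfl | hb
  · simp [hab rfl]
  have := mul_nonneg hb.le (klFun_nonneg (div_nonneg ha hb.le))
  rw [mul_klFun_div hb.ne'] at this
  linarith

section RelEntropy

variable {β : Type*} [Fintype β]

theorem sq_sum_abs_sub_le_two_mul_relEntropy {p q : β → ℝ} (hp0 : ∀ x, 0 ≤ p x)
    (hq0 : ∀ x, 0 ≤ q x) (hp1 : ∑ x, p x = 1) (hq1 : ∑ x, q x = 1)
    (hpq : ∀ x, q x = 0 → p x = 0) :
    (∑ x, |p x - q x|) ^ 2 ≤ 2 * relEntropy p q := by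
  -- Cauchy–Schwarz against the weights `(2p + 4q) / 3`, which sum to `2`.
  have hcs := sum_sq_le_sum_mul_sum_of_sq_le_mul univ (r := fun x => |p x - q x|)
    (f := fun x => (2 * p x + 4 * q x) / 3) (g := fun x => p x * log (p x / q x) - p x + q x)
    (fun x _ => by linarith [hp0 x, hq0 x])
    (fun x _ => by linarith [sub_le_mul_log_div (hp0 x) (hq0 x) (hpq x)])
    (fun x _ => by
      rw [sq_abs, div_mul_eq_mul_div, le_div_iff₀ three_pos, mul_comm]
      exact three_mul_sq_sub_le (hp0 x) (hq0 x) (hpq x))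
  have hf : ∑ x, (2 * p x + 4 * q x) / 3 = 2 := by
    rw [← sum_div, sum_add_distrib, ← mul_sum, ← mul_sum, hp1, hq1]
    norm_num
  have hg : ∑ x, (p x * log (p x / q x) - p x + q x) = relEntropy p q := by
    rw [sum_add_distrib, sum_sub_distrib, hp1, hq1, relEntropy]
    ring
  rwa [hf, hg] at hcs

theorem sum_sub_sum_le_relEntropy {p q : β → ℝ} (hp0 : ∀ x, 0 ≤ p x) (hq0 : ∀ x, 0 ≤ q x)
    (hpq : ∀ x, q x = 0 → p x = 0) : ∑ x, p x - ∑ x, q x ≤ relEntropy p q := by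
  rw [← sum_sub_distrib]
  exact sum_le_sum fun x _ => sub_le_mul_log_div (hp0 x) (hq0 x) (hpq x)

theorem relEntropy_le_log_of_le_mul {p q : β → ℝ} {K : ℝ} (hp0 : ∀ x, 0 ≤ p x)
    (hq0 : ∀ x, 0 ≤ q x) (hp1 : ∑ x, p x = 1) (hpq : ∀ x, p x ≤ K * q x) :
    relEntropy p q ≤ log K := by
  calc relEntropy p q ≤ ∑ x, p x * log K := by
        refine sum_le_sum fun x _ => ?_
        rcases (hp0 x).eq_or_lt with hx | hx
        · simp [← hx]
        have hKq : 0 < K * q x := hx.trans_le (hpq x)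
        have hq : 0 < q x := lt_of_le_of_ne (hq0 x) fun h => by simp [← h] at hKq
        refine mul_le_mul_of_nonneg_left (log_le_log (div_pos hx hq) ?_) hx.le
        exact (div_le_iff₀ hq).2 (hpq x)
    _ = log K := by rw [← sum_mul, hp1, one_mul]

end RelEntropy

section Marginals

variable {ι : Type*} [Fintype ι] [DecidableEq ι] {α : ι → Type*} [∀ i, Fintype (α i)]
  [∀ i, DecidableEq (α i)]
  {p : (∀ i, α i) → ℝ}

theorem relEntropy_pi_eq_add (q : ∀ i, α i → ℝ) (hp0 : ∀ v, 0 ≤ p v)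
    (hpq : ∀ v, ∏ i, q i (v i) = 0 → p v = 0) :
    relEntropy p (fun v => ∏ i, q i (v i))
      = relEntropy p (fun v => ∏ i, pushforward (· i) p (v i))
        + ∑ i, relEntropy (pushforward (· i) p) (q i) := by
  have hm : ∀ i, relEntropy (pushforward (· i) p) (q i)
      = ∑ v, p v * log (pushforward (· i) p (v i) / q i (v i)) :=
    fun i => sum_pushforward_mul _ _ _
  simp_rw [hm, relEntropy]
  rw [sum_comm, ← sum_add_distrib]
  refine sum_congr rfl fun v _ => ?_
  rw [← mul_sum, ← mul_add]
  rcases (hp0 v).eq_or_lt with hv | hv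
  · simp [← hv]
  have hmv : ∀ i, pushforward (· i) p (v i) ≠ 0 := fun i =>
    (hv.trans_le (le_pushforward_apply (· i) hp0 v)).ne'
  have hqv : ∀ i, q i (v i) ≠ 0 := fun i =>
    prod_ne_zero_iff.1 (mt (hpq v) hv.ne') i (mem_univ i)
  rw [log_div hv.ne' (prod_ne_zero_iff.2 fun i _ => hqv i),
    log_div hv.ne' (prod_ne_zero_iff.2 fun i _ => hmv i), log_prod (fun i _ => hqv i),
    log_prod (fun i _ => hmv i)]
  simp only [log_div (hmv _) (hqv _), sum_sub_distrib]
  ring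

theorem sum_relEntropy_pushforward_le (q : ∀ i, α i → ℝ) (hp0 : ∀ v, 0 ≤ p v)
    (hp1 : ∑ v, p v = 1) (hpq : ∀ v, ∏ i, q i (v i) = 0 → p v = 0) :
    ∑ i, relEntropy (pushforward (· i) p) (q i) ≤ relEntropy p (fun v => ∏ i, q i (v i)) := by
  rw [relEntropy_pi_eq_add q hp0 hpq, le_add_iff_nonneg_left]
  have hprod1 : ∑ v : ∀ i, α i, ∏ i, pushforward (· i) p (v i) = 1 := by
    rw [← Fintype.prod_sum]
    simp [sum_pushforward, hp1]
  have hgibbs := sum_sub_sum_le_relEntropy (q := fun v => ∏ i, pushforward (· i) p (v i)) hp0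
    (fun v => prod_nonneg fun i _ => pushforward_nonneg _ hp0 (v i)) fun v hv => by
      obtain ⟨i, -, hi⟩ := prod_eq_zero_iff.1 hv
      exact le_antisymm (hi ▸ le_pushforward_apply (· i) hp0 v) (hp0 v)
  linarith

theorem sum_relEntropy_pushforward_le_log {Ω : Type*} [Fintype Ω] {P w : Ω → ℝ}
    {V : Ω → ∀ i, α i} {K : ℝ} (hP0 : ∀ ω, 0 ≤ P ω)
    (hprod : ∀ v, pushforward V P v = ∏ i, pushforward (fun ω => V ω i) P (v i))
    (hw0 : ∀ ω, 0 ≤ w ω) (hw1 : ∑ ω, w ω = 1) (hwP : ∀ ω, w ω ≤ K * P ω) :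
    ∑ i, relEntropy (pushforward (fun ω => V ω i) w) (pushforward (fun ω => V ω i) P)
      ≤ log K := by
  have hjoint : ∀ v, pushforward V w v ≤ K * ∏ i, pushforward (fun ω => V ω i) P (v i) :=
    fun v => hprod v ▸ pushforward_le_const_mul V hwP v
  have hsum : ∑ v, pushforward V w v = 1 := by rw [sum_pushforward, hw1]
  calc ∑ i, relEntropy (pushforward (fun ω => V ω i) w) (pushforward (fun ω => V ω i) P)
      = ∑ i, relEntropy (pushforward (· i) (pushforward V w)) (pushforward (fun ω => V ω i) P) := by
        simp only [pushforward_pushforward]; rfl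
    _ ≤ relEntropy (pushforward V w) (fun v => ∏ i, pushforward (fun ω => V ω i) P (v i)) :=
        sum_relEntropy_pushforward_le _ (pushforward_nonneg V hw0) hsum fun v hv =>
          le_antisymm (by simpa [hv] using hjoint v) (pushforward_nonneg V hw0 v)
    _ ≤ log K :=
        relEntropy_le_log_of_le_mul (pushforward_nonneg V hw0)
          (fun v => prod_nonneg fun i _ => pushforward_nonneg _ hP0 _) hsum hjoint

end Marginals

theorem mean_le_sqrt_mean_sq {ι : Type*} (s : Finset ι) (f : ι → ℝ) :
    1 / #s * ∑ i ∈ s, f i ≤ √(1 / #s * ∑ i ∈ s, f i ^ 2) := by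
  refine (le_abs_self _).trans (abs_le_sqrt ?_)
  calc (1 / #s * ∑ i ∈ s, f i) ^ 2 = (1 / #s) ^ 2 * (∑ i ∈ s, f i) ^ 2 := by ring
    _ ≤ (1 / #s) ^ 2 * (#s * ∑ i ∈ s, f i ^ 2) := by gcongr; exact sq_sum_le_card_mul_sum_sq
    _ = 1 / #s * ∑ i ∈ s, f i ^ 2 := by
      rcases eq_or_ne (#s : ℝ) 0 with h | h
      · simp [h]
      · field_simp

theorem mean_le_sqrt_of_sq_le_two_mul {ι : Type*} (s : Finset ι) {f g : ι → ℝ} {L : ℝ}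
    (hfg : ∀ i ∈ s, f i ^ 2 ≤ 2 * g i) (hg : ∑ i ∈ s, g i ≤ L) :
    1 / #s * ∑ i ∈ s, f i ≤ √(2 / #s * L) := by
  refine (mean_le_sqrt_mean_sq s f).trans (sqrt_le_sqrt ?_)
  calc 1 / #s * ∑ i ∈ s, f i ^ 2 ≤ 1 / #s * ∑ i ∈ s, 2 * g i := by
        gcongr with i hi
        exact hfg i hi
    _ = 2 / #s * ∑ i ∈ s, g i := by rw [← mul_sum]; ring
    _ ≤ 2 / #s * L := mul_le_mul_of_nonneg_left hg (by positivity)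

theorem log_le_logb_two {x : ℝ} (hx : 1 ≤ x) : log x ≤ logb 2 x := by
  rw [logb, le_div_iff₀ (log_pos one_lt_two)]
  exact mul_le_of_le_one_right (log_nonneg hx) (log_two_lt_d9.le.trans (by norm_num))

open Classical in
theorem marginals_close_after_conditioning_general
    {Ω : Type*} [Fintype Ω] {n : ℕ}
    {α : Fin n → Type*} [∀ i, Fintype (α i)]
    (P : Ω → ℝ) (hP0 : ∀ ω, 0 ≤ P ω) (hP1 : ∑ ω, P ω = 1)
    (V : Ω → ∀ i, α i)
    (hprod : ∀ v : ∀ i, α i,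
      ∑ ω ∈ Finset.univ.filter (fun ω => V ω = v), P ω
        = ∏ i, ∑ ω ∈ Finset.univ.filter (fun ω => V ω i = v i), P ω)
    (F : Finset Ω) (hF : 0 < ∑ ω ∈ F, P ω) :
    (1 / n : ℝ) * ∑ i, ∑ x : α i,
        |(∑ ω ∈ F.filter (fun ω => V ω i = x), P ω) / (∑ ω ∈ F, P ω)
          - ∑ ω ∈ Finset.univ.filter (fun ω => V ω i = x), P ω|
      ≤ Real.sqrt ((2 / n) * Real.logb 2 (1 / ∑ ω ∈ F, P ω)) := by
  set c := ∑ ω ∈ F, P ω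
  set w := conditional P F
  have hm : ∀ i x, (∑ ω ∈ F.filter (fun ω => V ω i = x), P ω) / c
      = pushforward (fun ω => V ω i) w x := fun i x => (pushforward_conditional _ x).symm
  have hq : ∀ i x, ∑ ω ∈ Finset.univ.filter (fun ω => V ω i = x), P ω
      = pushforward (fun ω => V ω i) P x := fun _ _ => rfl
  simp only [hm, hq]
  have hw0 : ∀ ω, 0 ≤ w ω := conditional_nonneg hP0
  have hw1 : ∑ ω, w ω = 1 := sum_conditional hF.ne'
  have hwP : ∀ ω, w ω ≤ 1 / c * P ω := conditional_le hP0
  have hc1 : 1 ≤ 1 / c := by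
    rw [le_div_iff₀ hF, one_mul, ← hP1]
    exact sum_le_sum_of_subset_of_nonneg (subset_univ F) fun ω _ _ => hP0 ω
  have hpinsker : ∀ i ∈ univ, (∑ x, |pushforward (fun ω => V ω i) w x
      - pushforward (fun ω => V ω i) P x|) ^ 2
      ≤ 2 * relEntropy (pushforward (fun ω => V ω i) w) (pushforward (fun ω => V ω i) P) :=
    fun i _ => sq_sum_abs_sub_le_two_mul_relEntropy (pushforward_nonneg _ hw0)
      (pushforward_nonneg _ hP0) (by rw [sum_pushforward, hw1]) (by rw [sum_pushforward, hP1])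
      fun x hx => le_antisymm (by simpa [hx] using pushforward_le_const_mul (fun ω => V ω i) hwP x)
        (pushforward_nonneg _ hw0 x)
  have hentropy := (sum_relEntropy_pushforward_le_log hP0 hprod hw0 hw1 hwP).trans
    (log_le_logb_two hc1)
  simpa only [card_univ, Fintype.card_fin] using
    mean_le_sqrt_of_sq_le_two_mul univ hpinsker hentropy

open Classical in
/-- Raz/Holenstein: If `V = (V₁, …, Vₙ)` has a product distribution under a
finite probability space `(Ω, P)` and `F` is an event with `P[F] > 0`, then
`(1/n) ∑ᵢ ‖P_{Vᵢ|F} - P_{Vᵢ}‖₁ ≤ √((2/n) log₂(1/P[F]))`. -/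
theorem marginals_close_after_conditioning
    {Ω : Type*} [Fintype Ω] {n : ℕ} (hn : 0 < n)
    {α : Fin n → Type*} [∀ i, Fintype (α i)]
    (P : Ω → ℝ) (hP0 : ∀ ω, 0 ≤ P ω) (hP1 : ∑ ω, P ω = 1)
    (V : Ω → ∀ i, α i)
    (hprod : ∀ v : ∀ i, α i,
      ∑ ω ∈ Finset.univ.filter (fun ω => V ω = v), P ω
        = ∏ i, ∑ ω ∈ Finset.univ.filter (fun ω => V ω i = v i), P ω)
    (F : Finset Ω) (hF : 0 < ∑ ω ∈ F, P ω) :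
    (1 / n : ℝ) * ∑ i, ∑ x : α i,
        |(∑ ω ∈ F.filter (fun ω => V ω i = x), P ω) / (∑ ω ∈ F, P ω)
          - ∑ ω ∈ Finset.univ.filter (fun ω => V ω i = x), P ω|
      ≤ Real.sqrt ((2 / n) * Real.logb 2 (1 / ∑ ω ∈ F, P ω)) :=
  marginals_close_after_conditioning_general P hP0 hP1 V hprod F hF
end

section
/- Let $(\Sigma, \nu)$ be a finite probability space and $f \in L^2(\Sigma^n, \nu^{\otimes n})$. For $p, \delta \in [0,1]$, let $I \sim_{1-p} [n]$ (each coordinate included independently with probability $1-p$) and $z \sim \nu^{\otimes I}$. Then the expected noise stability of the recentered restriction satisfies $\mathbb{E}_{I, z}\left[\mathrm{Stab}_{1-\delta}[f_{I \to z} - \nu(f_{I \to z})]\right] = \mathrm{Stab}_{1 - p\delta}[f] - \mathrm{Stab}_{1-p}[f]$. -/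
open Classical in
/-- The noise stability `Stab_ρ[g] = ⟨g, T_ρ g⟩` of `g : Σ^ι → ℂ` with respect to the
measure `ν` on `Σ`, written out as a double sum over the correlated-pair distribution: each
coordinate of `y` equals the corresponding coordinate of `x` with probability `ρ` and is
resampled from `ν` otherwise. -/
noncomputable def stab {Sig : Type*} [Fintype Sig] {ι : Type*} [Fintype ι]
    (ν : Sig → ℝ) (ρ : ℝ) (g : (ι → Sig) → ℂ) : ℂ :=
  ∑ x : ι → Sig, ∑ y : ι → Sig,
    ((∏ i, ν (x i) * (ρ * (if y i = x i then 1 else 0) + (1 - ρ) * ν (y i)) : ℝ) : ℂ)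
      * g x * (starRingEnd ℂ) (g y)

open Classical in
/-- The expectation `ν(g)` of `g : Σ^ι → ℂ` under `ν^{⊗ι}`. -/
noncomputable def expec {Sig : Type*} [Fintype Sig] {ι : Type*} [Fintype ι]
    (ν : Sig → ℝ) (g : (ι → Sig) → ℂ) : ℂ :=
  ∑ x : ι → Sig, ((∏ i, ν (x i) : ℝ) : ℂ) * g x

/-- The restriction `f_{I → z}` of `f : Σ^n → ℂ`, fixing the coordinates in `I` to the
values `z` and leaving the coordinates outside `I` free. -/
def restr {Sig : Type*} {n : ℕ} (f : (Fin n → Sig) → ℂ) (I : Finset (Fin n))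
    (z : ↥I → Sig) : ({i : Fin n // i ∉ I} → Sig) → ℂ :=
  fun y => f (fun i => if h : i ∈ I then z ⟨i, h⟩ else y ⟨i, h⟩)

open Classical

set_option linter.unusedSectionVars false

section auxgen
variable {Sig : Type*} [Fintype Sig] {ι : Type*} [Fintype ι]

private lemma margY (ν : Sig → ℝ) (hν1 : ∑ a, ν a = 1) (ρ : ℝ) (x : ι → Sig) :
    ∑ y : ι → Sig, (∏ i, ν (x i) * (ρ * (if y i = x i then 1 else 0) + (1 - ρ) * ν (y i)))
      = ∏ i, ν (x i) := by
  rw [← Fintype.prod_sum (fun i b => ν (x i) * (ρ * (if b = x i then 1 else 0) + (1 - ρ) * ν b))]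
  apply Finset.prod_congr rfl
  intro i _
  rw [← Finset.mul_sum, Finset.sum_add_distrib, ← Finset.mul_sum, ← Finset.mul_sum,
    Finset.sum_ite_eq' Finset.univ (x i) (fun _ => (1:ℝ)), hν1]
  simp

private lemma margX (ν : Sig → ℝ) (hν1 : ∑ a, ν a = 1) (ρ : ℝ) (y : ι → Sig) :
    ∑ x : ι → Sig, (∏ i, ν (x i) * (ρ * (if y i = x i then 1 else 0) + (1 - ρ) * ν (y i)))
      = ∏ i, ν (y i) := by
  rw [← Fintype.prod_sum (fun i a => ν a * (ρ * (if y i = a then 1 else 0) + (1 - ρ) * ν (y i)))]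
  apply Finset.prod_congr rfl
  intro i _
  have : ∀ a, ν a * (ρ * (if y i = a then 1 else 0) + (1 - ρ) * ν (y i))
      = ρ * (if y i = a then ν a else 0) + (1 - ρ) * ν (y i) * ν a := by
    intro a; split_ifs <;> ring
  rw [Finset.sum_congr rfl fun a _ => this a, Finset.sum_add_distrib, ← Finset.mul_sum,
    ← Finset.mul_sum, Finset.sum_ite_eq Finset.univ (y i) (fun a => ν a), hν1]
  simp; ring

private lemma total (ν : Sig → ℝ) (hν1 : ∑ a, ν a = 1) :
    ∑ x : ι → Sig, (∏ i, ν (x i)) = (1:ℝ) := by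
  rw [← Fintype.prod_sum (fun _ b => ν b)]
  simp [hν1]

private lemma stab_sub_expec (ν : Sig → ℝ) (hν1 : ∑ a, ν a = 1) (ρ : ℝ) (g : (ι → Sig) → ℂ) :
    stab ν ρ (fun y => g y - expec ν g)
      = stab ν ρ g - expec ν g * (starRingEnd ℂ) (expec ν g) := by
  set c := expec ν g with hc
  set W : (ι → Sig) → (ι → Sig) → ℝ :=
    fun x y => ∏ i, ν (x i) * (ρ * (if y i = x i then 1 else 0) + (1 - ρ) * ν (y i)) with hW
  have expand : stab ν ρ (fun y => g y - c)
      = (∑ x, ∑ y, ((W x y : ℝ) : ℂ) * g x * (starRingEnd ℂ) (g y))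
        - (∑ x, ∑ y, ((W x y : ℝ) : ℂ) * g x * (starRingEnd ℂ) c)
        - ((∑ x, ∑ y, ((W x y : ℝ) : ℂ) * c * (starRingEnd ℂ) (g y))
          - ∑ x, ∑ y, ((W x y : ℝ) : ℂ) * c * (starRingEnd ℂ) c) := by
    rw [stab]
    rw [← Finset.sum_sub_distrib, ← Finset.sum_sub_distrib, ← Finset.sum_sub_distrib]
    apply Finset.sum_congr rfl; intro x _
    rw [← Finset.sum_sub_distrib, ← Finset.sum_sub_distrib, ← Finset.sum_sub_distrib]
    apply Finset.sum_congr rfl; intro y _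
    simp only [map_sub]
    ring
  have hconjc : (starRingEnd ℂ) c
      = ∑ y : ι → Sig, ((∏ i, ν (y i) : ℝ) : ℂ) * (starRingEnd ℂ) (g y) := by
    rw [hc, expec, map_sum]
    exact Finset.sum_congr rfl fun y _ => by rw [map_mul, Complex.conj_ofReal]
  have hA : (∑ x : ι → Sig, ∑ y : ι → Sig, ((W x y : ℝ) : ℂ) * g x * (starRingEnd ℂ) c)
      = c * (starRingEnd ℂ) c := by
    have : ∀ x : ι → Sig, ∑ y : ι → Sig, ((W x y : ℝ) : ℂ) * g x * (starRingEnd ℂ) c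
        = ((∏ i, ν (x i) : ℝ) : ℂ) * g x * (starRingEnd ℂ) c := by
      intro x
      rw [← Finset.sum_mul, ← Finset.sum_mul, ← Complex.ofReal_sum, margY ν hν1 ρ x]
    rw [Finset.sum_congr rfl fun x _ => this x, ← Finset.sum_mul]
    rw [hc, expec]
  have hB : (∑ x : ι → Sig, ∑ y : ι → Sig, ((W x y : ℝ) : ℂ) * c * (starRingEnd ℂ) (g y))
      = c * (starRingEnd ℂ) c := by
    rw [Finset.sum_comm]
    have : ∀ y : ι → Sig, ∑ x : ι → Sig, ((W x y : ℝ) : ℂ) * c * (starRingEnd ℂ) (g y)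
        = ((∏ i, ν (y i) : ℝ) : ℂ) * c * (starRingEnd ℂ) (g y) := by
      intro y
      rw [← Finset.sum_mul, ← Finset.sum_mul, ← Complex.ofReal_sum, margX ν hν1 ρ y]
    rw [Finset.sum_congr rfl fun y _ => this y, hconjc, Finset.mul_sum]
    exact Finset.sum_congr rfl fun y _ => by ring
  have hD : (∑ x : ι → Sig, ∑ y : ι → Sig, ((W x y : ℝ) : ℂ) * c * (starRingEnd ℂ) c)
      = c * (starRingEnd ℂ) c := by
    have : ∀ x : ι → Sig, ∑ y : ι → Sig, ((W x y : ℝ) : ℂ) * c * (starRingEnd ℂ) c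
        = ((∏ i, ν (x i) : ℝ) : ℂ) * c * (starRingEnd ℂ) c := by
      intro x
      rw [← Finset.sum_mul, ← Finset.sum_mul, ← Complex.ofReal_sum, margY ν hν1 ρ x]
    rw [Finset.sum_congr rfl fun x _ => this x, ← Finset.sum_mul, ← Finset.sum_mul,
      ← Complex.ofReal_sum, total ν hν1]
    simp
  rw [expand, hA, hB, hD, stab]
  ring

private lemma expec_mul_conj (ν : Sig → ℝ) (g : (ι → Sig) → ℂ) :
    expec ν g * (starRingEnd ℂ) (expec ν g)
      = ∑ x : ι → Sig, ∑ y : ι → Sig,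
          ((∏ i, ν (x i) * ν (y i) : ℝ) : ℂ) * g x * (starRingEnd ℂ) (g y) := by
  rw [expec, map_sum, Finset.sum_mul]
  refine Finset.sum_congr rfl fun x _ => ?_
  rw [Finset.mul_sum]
  refine Finset.sum_congr rfl fun y _ => ?_
  rw [map_mul, Complex.conj_ofReal, Finset.prod_mul_distrib, Complex.ofReal_mul]
  ring

end auxgen

section auxfin
variable {Sig : Type*} [Fintype Sig] {n : ℕ}

private def mrg (I : Finset (Fin n)) (z : ↥I → Sig)
    (x : {i : Fin n // i ∉ I} → Sig) : Fin n → Sig :=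
  fun i => if h : i ∈ I then z ⟨i, h⟩ else x ⟨i, h⟩

private lemma restr_eq {f : (Fin n → Sig) → ℂ} {I : Finset (Fin n)} (z : ↥I → Sig)
    (x : {i : Fin n // i ∉ I} → Sig) : restr f I z x = f (mrg I z x) := rfl

private lemma mrg_mem {I : Finset (Fin n)} (z : ↥I → Sig) (x : {i : Fin n // i ∉ I} → Sig)
    (i : ↥I) : mrg I z x i.1 = z i := dif_pos i.2

private lemma mrg_notMem {I : Finset (Fin n)} (z : ↥I → Sig) (x : {i : Fin n // i ∉ I} → Sig)
    (i : {i : Fin n // i ∉ I}) : mrg I z x i.1 = x i := dif_neg i.2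

private lemma univ_eq {α : Type*} (i1 i2 : Fintype α) :
    @Finset.univ α i1 = @Finset.univ α i2 := by
  cases Subsingleton.elim i1 i2; rfl

private lemma sum_merge (I : Finset (Fin n)) (H : (Fin n → Sig) → ℂ) :
    ∑ x : Fin n → Sig, H x
      = ∑ z : ↥I → Sig, ∑ x : {i : Fin n // i ∉ I} → Sig, H (mrg I z x) := by
  rw [← (Equiv.piEquivPiSubtypeProd (fun i : Fin n => i ∈ I) (fun _ => Sig)).symm.sum_comp H]
  rw [Fintype.sum_prod_type]
  apply Finset.sum_congr (univ_eq _ _); intro z _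
  apply Finset.sum_congr (univ_eq _ _); intro x _
  rfl

private lemma prod_ite_subtype (I : Finset (Fin n)) (F G : Fin n → ℝ) :
    (∏ i, if i ∈ I then F i else G i)
      = (∏ i : ↥I, F i.1) * ∏ i : {i : Fin n // i ∉ I}, G i.1 := by
  rw [← Fintype.prod_subtype_mul_prod_subtype (fun i : Fin n => i ∈ I)
    (fun i : Fin n => if i ∈ I then F i else G i)]
  congr 1
  · refine Finset.prod_congr (univ_eq _ _) fun i _ => if_pos i.2
  · refine Finset.prod_congr (univ_eq _ _) fun i _ => if_neg i.2

private lemma prod_ind (I : Finset (Fin n)) (zx zy : ↥I → Sig) :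
    (∏ i : ↥I, (if zy i = zx i then (1:ℝ) else 0)) = if zy = zx then 1 else 0 := by
  by_cases h : zy = zx
  · simp [h]
  · rw [if_neg h]
    obtain ⟨i, hi⟩ := Function.ne_iff.mp h
    exact Finset.prod_eq_zero (Finset.mem_univ i) (by simp [hi])

private lemma weight_eq (ν : Sig → ℝ) (c : Sig → Sig → ℝ) (I : Finset (Fin n))
    (zx zy : ↥I → Sig) (x' y' : {i : Fin n // i ∉ I} → Sig) :
    (∏ i, (if i ∈ I then ν (mrg I zx x' i) * (if mrg I zy y' i = mrg I zx x' i then 1 else 0)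
        else c (mrg I zx x' i) (mrg I zy y' i)))
      = ((∏ i : ↥I, ν (zx i)) * (if zy = zx then 1 else 0))
          * (∏ i : {i : Fin n // i ∉ I}, c (x' i) (y' i)) := by
  rw [prod_ite_subtype I
    (fun j => ν (mrg I zx x' j) * (if mrg I zy y' j = mrg I zx x' j then 1 else 0))
    (fun j => c (mrg I zx x' j) (mrg I zy y' j))]
  rw [← prod_ind I zx zy, ← Finset.prod_mul_distrib]
  congr 1
  · exact Finset.prod_congr rfl fun i _ => by rw [mrg_mem, mrg_mem]
  · exact Finset.prod_congr rfl fun i _ => by rw [mrg_notMem, mrg_notMem]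

set_option maxHeartbeats 1000000 in
private lemma sum_restr_quad (ν : Sig → ℝ) (f : (Fin n → Sig) → ℂ) (I : Finset (Fin n))
    (c : Sig → Sig → ℝ) :
    ∑ x : Fin n → Sig, ∑ y : Fin n → Sig,
        ((∏ i, (if i ∈ I then ν (x i) * (if y i = x i then 1 else 0) else c (x i) (y i)) : ℝ) : ℂ)
          * f x * (starRingEnd ℂ) (f y)
      = ∑ z : ↥I → Sig, ((∏ i, ν (z i) : ℝ) : ℂ) *
          (∑ x : {i : Fin n // i ∉ I} → Sig, ∑ y : {i : Fin n // i ∉ I} → Sig,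
            ((∏ i, c (x i) (y i) : ℝ) : ℂ) * restr f I z x * (starRingEnd ℂ) (restr f I z y)) := by
  rw [sum_merge I (fun x => ∑ y : Fin n → Sig,
    ((∏ i, (if i ∈ I then ν (x i) * (if y i = x i then 1 else 0) else c (x i) (y i)) : ℝ) : ℂ)
      * f x * (starRingEnd ℂ) (f y))]
  refine Finset.sum_congr rfl fun zx _ => ?_
  calc
    ∑ x' : {i : Fin n // i ∉ I} → Sig, ∑ y : Fin n → Sig,
        ((∏ i, (if i ∈ I then ν (mrg I zx x' i) * (if y i = mrg I zx x' i then 1 else 0)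
            else c (mrg I zx x' i) (y i)) : ℝ) : ℂ)
          * f (mrg I zx x') * (starRingEnd ℂ) (f y)
      = ∑ x' : {i : Fin n // i ∉ I} → Sig, ∑ zy : ↥I → Sig, ∑ y' : {i : Fin n // i ∉ I} → Sig,
          (if zy = zx then
            (((∏ i : ↥I, ν (zx i)) * (∏ i : {i : Fin n // i ∉ I}, c (x' i) (y' i)) : ℝ) : ℂ)
              * f (mrg I zx x') * (starRingEnd ℂ) (f (mrg I zy y'))
          else 0) := by
        refine Finset.sum_congr rfl fun x' _ => ?_
        rw [sum_merge I (fun y => ((∏ i, (if i ∈ I then ν (mrg I zx x' i)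
          * (if y i = mrg I zx x' i then 1 else 0)
            else c (mrg I zx x' i) (y i)) : ℝ) : ℂ)
          * f (mrg I zx x') * (starRingEnd ℂ) (f y))]
        refine Finset.sum_congr rfl fun zy _ => Finset.sum_congr rfl fun y' _ => ?_
        rw [weight_eq ν c I zx zy x' y']
        by_cases h : zy = zx
        · rw [if_pos h, if_pos h, mul_one]
        · rw [if_neg h, if_neg h]; simp
    _ = ∑ x' : {i : Fin n // i ∉ I} → Sig, ∑ y' : {i : Fin n // i ∉ I} → Sig,
          (((∏ i : ↥I, ν (zx i)) * (∏ i : {i : Fin n // i ∉ I}, c (x' i) (y' i)) : ℝ) : ℂ)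
            * f (mrg I zx x') * (starRingEnd ℂ) (f (mrg I zx y')) := by
        refine Finset.sum_congr rfl fun x' _ => ?_
        have key : ∀ zy : ↥I → Sig,
            (∑ y' : {i : Fin n // i ∉ I} → Sig, if zy = zx then
              (((∏ i : ↥I, ν (zx i)) * (∏ i : {i : Fin n // i ∉ I}, c (x' i) (y' i)) : ℝ) : ℂ)
                * f (mrg I zx x') * (starRingEnd ℂ) (f (mrg I zy y')) else 0)
            = if zy = zx then
                ∑ y' : {i : Fin n // i ∉ I} → Sig,
                  (((∏ i : ↥I, ν (zx i)) * (∏ i : {i : Fin n // i ∉ I}, c (x' i) (y' i)) : ℝ) : ℂ)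
                    * f (mrg I zx x') * (starRingEnd ℂ) (f (mrg I zy y'))
              else 0 := by
          intro zy; split_ifs with h
          · rfl
          · simp
        rw [Finset.sum_congr rfl fun zy _ => key zy, Finset.sum_ite_eq' Finset.univ zx]
        simp
    _ = ((∏ i, ν (zx i) : ℝ) : ℂ) *
          (∑ x : {i : Fin n // i ∉ I} → Sig, ∑ y : {i : Fin n // i ∉ I} → Sig,
            ((∏ i, c (x i) (y i) : ℝ) : ℂ) * restr f I zx x * (starRingEnd ℂ) (restr f I zx y)) := by
        rw [Finset.mul_sum]
        refine Finset.sum_congr rfl fun x' _ => ?_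
        rw [Finset.mul_sum]
        refine Finset.sum_congr rfl fun y' _ => ?_
        rw [restr_eq, restr_eq, Complex.ofReal_mul]
        ring

private lemma sum_powerset (p : ℝ) (A B : Fin n → ℝ) :
    ∑ I : Finset (Fin n),
        (1 - p) ^ I.card * p ^ (n - I.card) * ∏ i, (if i ∈ I then A i else B i)
      = ∏ i, ((1 - p) * A i + p * B i) := by
  rw [Fintype.prod_add]
  refine Finset.sum_congr rfl fun I _ => ?_
  rw [← Finset.prod_mul_prod_compl I (fun i => if i ∈ I then A i else B i)]
  rw [Finset.prod_congr rfl (fun i hi => if_pos hi),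
    Finset.prod_congr rfl (fun i hi => if_neg (Finset.mem_compl.mp hi))]
  rw [Finset.prod_mul_distrib, Finset.prod_mul_distrib, Finset.prod_const, Finset.prod_const,
    Finset.card_compl, Fintype.card_fin]
  ring

private lemma qq_congr {α β : Type*} [AddCommMonoid β] {i1 i2 : Fintype α} {F G : α → β}
    (h : ∀ a, F a = G a) :
    @Finset.sum α β _ (@Finset.univ α i1) F = @Finset.sum α β _ (@Finset.univ α i2) G := by
  cases Subsingleton.elim i1 i2
  exact Finset.sum_congr rfl fun a _ => h a

private lemma pp_congr {α β : Type*} [CommMonoid β] {i1 i2 : Fintype α} {F G : α → β}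
    (h : ∀ a, F a = G a) :
    @Finset.prod α β _ (@Finset.univ α i1) F = @Finset.prod α β _ (@Finset.univ α i2) G := by
  cases Subsingleton.elim i1 i2
  exact Finset.prod_congr rfl fun a _ => h a

end auxfin

set_option maxHeartbeats 1000000 in
/-- For a `p`-random restriction (`I ∼_{1-p} [n]`, `z ∼ ν^{⊗I}`), the expected
noise stability of the recentered restriction satisfies
`𝔼_{I,z}[Stab_{1-δ}[f_{I→z} - ν(f_{I→z})]] = Stab_{1-pδ}[f] - Stab_{1-p}[f]`. -/
theorem expected_stab_of_random_restriction
    {Sig : Type*} [Fintype Sig] {n : ℕ}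
    (ν : Sig → ℝ) (hν0 : ∀ a, 0 ≤ ν a) (hν1 : ∑ a, ν a = 1)
    (f : (Fin n → Sig) → ℂ) (p δ : ℝ)
    (hp0 : 0 ≤ p) (hp1 : p ≤ 1) (hδ0 : 0 ≤ δ) (hδ1 : δ ≤ 1) :
    ∑ I : Finset (Fin n),
      (((1 - p) ^ I.card * p ^ (n - I.card) : ℝ) : ℂ) *
        ∑ z : ↥I → Sig, ((∏ i, ν (z i) : ℝ) : ℂ) *
          stab ν (1 - δ) (fun y => restr f I z y - expec ν (restr f I z))
      = stab ν (1 - p * δ) f - stab ν (1 - p) f := by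
  have step1 : ∀ (I : Finset (Fin n)) (z : ↥I → Sig),
      stab ν (1 - δ) (fun y => restr f I z y - expec ν (restr f I z))
        = stab ν (1 - δ) (restr f I z)
          - expec ν (restr f I z) * (starRingEnd ℂ) (expec ν (restr f I z)) :=
    fun I z => stab_sub_expec ν hν1 _ _
  simp only [step1]
  have step2 : ∀ I : Finset (Fin n),
      (∑ z : ↥I → Sig, ((∏ i, ν (z i) : ℝ) : ℂ) *
        (stab ν (1 - δ) (restr f I z)
          - expec ν (restr f I z) * (starRingEnd ℂ) (expec ν (restr f I z))))
      = (∑ x : Fin n → Sig, ∑ y : Fin n → Sig,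
          ((∏ i, (if i ∈ I then ν (x i) * (if y i = x i then 1 else 0)
              else ν (x i) * ((1 - δ) * (if y i = x i then 1 else 0)
                + (1 - (1 - δ)) * ν (y i))) : ℝ) : ℂ) * f x * (starRingEnd ℂ) (f y))
        - (∑ x : Fin n → Sig, ∑ y : Fin n → Sig,
          ((∏ i, (if i ∈ I then ν (x i) * (if y i = x i then 1 else 0)
              else ν (x i) * ν (y i)) : ℝ) : ℂ) * f x * (starRingEnd ℂ) (f y)) := by
    intro I
    simp only [mul_sub, Finset.sum_sub_distrib]
    congr 1
    · refine Eq.trans (Finset.sum_congr rfl fun z _ => ?_) (sum_restr_quad ν f I (fun a b =>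
        ν a * ((1 - δ) * (if b = a then 1 else 0) + (1 - (1 - δ)) * ν b))).symm
      congr 1
      unfold stab
      refine qq_congr fun x => qq_congr fun y => ?_
      congr 2
    · refine Eq.trans (Finset.sum_congr rfl fun z _ => ?_)
        (sum_restr_quad ν f I (fun a b => ν a * ν b)).symm
      congr 1
      refine (expec_mul_conj ν (restr f I z)).trans (qq_congr fun x => qq_congr fun y => ?_)
      congr 2
  simp only [step2]
  have step3 : ∀ (c : Sig → Sig → ℝ) (ρ' : ℝ),
      (∀ a b : Sig, (1 - p) * (ν a * (if b = a then 1 else 0)) + p * c a b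
        = ν a * (ρ' * (if b = a then 1 else 0) + (1 - ρ') * ν b)) →
      (∑ I : Finset (Fin n), (((1 - p) ^ I.card * p ^ (n - I.card) : ℝ) : ℂ) *
        ∑ x : Fin n → Sig, ∑ y : Fin n → Sig,
          ((∏ i, (if i ∈ I then ν (x i) * (if y i = x i then 1 else 0)
              else c (x i) (y i)) : ℝ) : ℂ) * f x * (starRingEnd ℂ) (f y))
      = stab ν ρ' f := by
    intro c ρ' hc
    unfold stab
    simp only [Finset.mul_sum]
    rw [Finset.sum_comm]
    refine qq_congr fun x => ?_
    rw [Finset.sum_comm]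
    refine qq_congr fun y => ?_
    simp only [← mul_assoc, ← Complex.ofReal_mul]
    rw [← Finset.sum_mul, ← Finset.sum_mul, ← Complex.ofReal_sum]
    rw [sum_powerset p (fun i => ν (x i) * (if y i = x i then 1 else 0))
      (fun i => c (x i) (y i))]
    congr 2
    exact congrArg Complex.ofReal (pp_congr fun i => hc (x i) (y i))
  simp only [mul_sub, Finset.sum_sub_distrib]
  have e1 := step3 (fun a b =>
    ν a * ((1 - δ) * (if b = a then 1 else 0) + (1 - (1 - δ)) * ν b)) (1 - p * δ)
    (fun a b => by ring)
  have e2 := step3 (fun a b => ν a * ν b) (1 - p) (fun a b => by ring)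
  rw [e1, e2]
end

section
/- Let $(\Sigma, \mu)$ be a finite probability space and $n \in \mathbb{N}$. For $T \subseteq [n]$ let $E_T = \{x \in \Sigma^n : x_i = x_j \text{ for all } i, j \in T\}$. Let $S \subseteq [n]$ and let $1 \le k \le \sqrt{|S|}$ be an integer. Let $\nu$ be the distribution obtained by sampling a uniformly random $T \subseteq S$ with $|T| = k$ and then sampling $x \sim \mu^{\otimes n} | E_T$. Then $\|\nu - \mu^{\otimes n}\|_1 \le \frac{C k}{\sqrt{|S|}}$, where $C$ is a constant depending only on $\mu$. -/
/-!
Write `w = μ^{⊗n}` and `f_T` for the density of `w` conditioned on `E_T`, so that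
`w(E_T) = ∑ a, μ a ^ k` for `|T| = k`. Then `ν - w = w · g` with `g` the average of `f_T - 1`
over `T`, hence `‖ν - w‖₁ ≤ (∑ w g²)^{1/2}` by Cauchy–Schwarz, and `∑ w g²` is the average over
pairs `(T, T')` of `⟨f_T, f_T'⟩_w - 1`. For disjoint `T, T'` the events are independent and this
vanishes; otherwise `E_T ∩ E_T' = E_{T ∪ T'}`, and if `ε` is the least positive atom of `μ` the
term is at most `(1 + d)^{|T ∩ T'|} - 1` with `1 + d = ε⁻¹`. Expanding
`(1 + d)^j - 1 = ∑_{s ≥ 1} C(j, s) d^s` and counting, for each `s`-set, the pairs containing it,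
the average is at most `∑_{s ≥ 1} (2 d k² / |S|)^s / s! ≤ 2 d e^{2d} k² / |S|`.
-/

open Finset Real
open scoped Nat

lemma pow_sub_one_eq_sum_range_choose_mul (c : ℝ) {j k : ℕ} (hjk : j ≤ k) :
    c ^ j - 1 = ∑ s ∈ range k, (j.choose (s + 1) : ℝ) * (c - 1) ^ (s + 1) := by
  have hbinom : c ^ j = ∑ s ∈ range (k + 1), (j.choose s : ℝ) * (c - 1) ^ s := by
    calc c ^ j = ((c - 1) + 1) ^ j := by ring
      _ = ∑ s ∈ range (j + 1), (j.choose s : ℝ) * (c - 1) ^ s := by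
        rw [add_pow]
        simp [mul_comm]
      _ = _ := by
        refine sum_subset (range_subset_range.mpr (by omega)) fun s _ hs => ?_
        rw [Nat.choose_eq_zero_of_lt (by simpa using hs), Nat.cast_zero, zero_mul]
  simp [hbinom, sum_range_succ']

lemma choose_sq_div_choose_le {m k s : ℕ} (hs : s ≤ k) (hkm : k ^ 2 ≤ m) :
    (k.choose s : ℝ) ^ 2 / m.choose s ≤ (2 * k ^ 2 / m) ^ s / s ! := by
  rcases Nat.eq_zero_or_pos m with rfl | hm
  · obtain rfl : s = 0 := by nlinarith
    simp
  have h2k : 2 * k ≤ m + 1 := by nlinarith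
  have hfac : (0 : ℝ) < s ! := by positivity
  have hm0 : (m : ℝ) ≠ 0 := by positivity
  have hmid : (m : ℝ) / 2 ≤ ((m + 1 - s : ℕ) : ℝ) := by
    rw [Nat.cast_sub (by omega)]
    push_cast
    have : (2 * s : ℝ) ≤ m + 1 := by exact_mod_cast (by omega : 2 * s ≤ m + 1)
    linarith
  have hlower : ((m : ℝ) / 2) ^ s / s ! ≤ m.choose s :=
    (div_le_div_of_nonneg_right (pow_le_pow_left₀ (by positivity) hmid s) hfac.le).trans
      (Nat.pow_le_choose s m)
  calc (k.choose s : ℝ) ^ 2 / (m.choose s : ℝ)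
      ≤ ((k : ℝ) ^ s / s !) ^ 2 / (((m : ℝ) / 2) ^ s / s !) := by
        gcongr
        exact Nat.choose_le_pow_div s k
    _ = (2 * (k : ℝ) ^ 2 / m) ^ s / s ! := by
        simp only [div_pow, mul_pow, ← pow_mul]
        field_simp
        ring

lemma choose_mul_choose_sub_sq_le {m k s : ℕ} (hs : s ≤ k) (hkm : k ^ 2 ≤ m) :
    (m.choose s : ℝ) * ((m - s).choose (k - s)) ^ 2
      ≤ (m.choose k) ^ 2 * ((2 * k ^ 2 / m) ^ s / s !) := by
  have hsm : s ≤ m := hs.trans (by nlinarith)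
  have hpos : (0 : ℝ) < m.choose s := by exact_mod_cast Nat.choose_pos hsm
  have hid : (m.choose k : ℝ) * k.choose s = m.choose s * (m - s).choose (k - s) := by
    exact_mod_cast Nat.choose_mul hs
  calc (m.choose s : ℝ) * ((m - s).choose (k - s)) ^ 2
      = (m.choose k) ^ 2 * ((k.choose s : ℝ) ^ 2 / m.choose s) := by
        field_simp
        rw [← mul_pow, ← hid]
        ring
    _ ≤ _ := mul_le_mul_of_nonneg_left (choose_sq_div_choose_le hs hkm) (by positivity)

lemma sum_range_pow_succ_div_factorial_le (k : ℕ) {t : ℝ} (ht : 0 ≤ t) :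
    ∑ s ∈ range k, t ^ (s + 1) / (s + 1)! ≤ t * exp t := by
  calc ∑ s ∈ range k, t ^ (s + 1) / (s + 1)!
      ≤ ∑ s ∈ range k, t * (t ^ s / s !) := by
        gcongr with s
        rw [pow_succ', mul_div_assoc]
        gcongr
        exact s.le_succ
    _ ≤ t * exp t := by
        rw [← mul_sum]
        exact mul_le_mul_of_nonneg_left (sum_le_exp_of_nonneg ht k) ht

lemma sum_sum_choose_card_inter {α : Type*} [DecidableEq α] (S : Finset α) {k s : ℕ}
    (hs : s ≤ k) :
    ∑ T ∈ S.powersetCard k, ∑ T' ∈ S.powersetCard k, (#(T ∩ T')).choose s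
      = (#S).choose s * ((#S - s).choose (k - s)) ^ 2 := by
  have hcount : ∀ T ∈ S.powersetCard k, ∀ T' ∈ S.powersetCard k, (#(T ∩ T')).choose s
      = ∑ R ∈ S.powersetCard s, (if R ⊆ T then 1 else 0) * (if R ⊆ T' then 1 else 0) := by
    intro T hT T' _
    have hTS := (mem_powersetCard.mp hT).1
    have hsets : (T ∩ T').powersetCard s = {R ∈ S.powersetCard s | R ⊆ T ∧ R ⊆ T'} := by
      ext R
      simp only [mem_powersetCard, mem_filter, subset_inter_iff]
      grind
    simp_rw [← card_powersetCard, hsets, card_filter, ite_zero_mul_ite_zero, mul_one]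
  calc ∑ T ∈ S.powersetCard k, ∑ T' ∈ S.powersetCard k, (#(T ∩ T')).choose s
      = ∑ R ∈ S.powersetCard s, (∑ T ∈ S.powersetCard k, if R ⊆ T then 1 else 0) *
          ∑ T' ∈ S.powersetCard k, if R ⊆ T' then 1 else 0 := by
        rw [sum_congr rfl fun T hT => sum_congr rfl fun T' hT' => hcount T hT T' hT']
        simp_rw [sum_mul_sum]
        exact (sum_congr rfl fun T _ => sum_comm).trans sum_comm
    _ = ∑ R ∈ S.powersetCard s, ((#S - s).choose (k - s)) ^ 2 := by
        refine sum_congr rfl fun R hR => ?_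
        obtain ⟨hRS, rfl⟩ := mem_powersetCard.mp hR
        rw [sum_boole, Nat.cast_id, card_filter_powersetCard_subset R S k hRS hs, sq]
    _ = _ := by rw [sum_const, card_powersetCard, smul_eq_mul]

lemma sum_sum_one_add_pow_card_inter_sub_one_div_le {α : Type*} [DecidableEq α] (S : Finset α)
    {k : ℕ} (hkS : k ^ 2 ≤ #S) {d : ℝ} (hd : 0 ≤ d) :
    (∑ T ∈ S.powersetCard k, ∑ T' ∈ S.powersetCard k, ((1 + d) ^ #(T ∩ T') - 1)) /
        #(S.powersetCard k) ^ 2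
      ≤ 2 * d * exp (2 * d) * k ^ 2 / #S := by
  set m := #S
  have hchoose : (0 : ℝ) < m.choose k := by
    exact_mod_cast Nat.choose_pos ((Nat.le_self_pow two_ne_zero k).trans hkS)
  rw [card_powersetCard, div_le_iff₀ (by positivity)]
  have ht : 2 * d * k ^ 2 / m ≤ 2 * d := by
    refine div_le_of_le_mul₀ (by positivity) (by positivity) ?_
    exact mul_le_mul_of_nonneg_left (by exact_mod_cast hkS) (by positivity)
  calc ∑ T ∈ S.powersetCard k, ∑ T' ∈ S.powersetCard k, ((1 + d) ^ #(T ∩ T') - 1)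
      = ∑ s ∈ range k, d ^ (s + 1) *
          ((m.choose (s + 1) : ℝ) * ((m - (s + 1)).choose (k - (s + 1))) ^ 2) := by
        have hexpand : ∀ T ∈ S.powersetCard k, ∀ T' ∈ S.powersetCard k,
            (1 + d) ^ #(T ∩ T') - 1
              = ∑ s ∈ range k, ((#(T ∩ T')).choose (s + 1) : ℝ) * d ^ (s + 1) := by
          intro T hT T' _
          have hj : #(T ∩ T') ≤ k :=
            (card_le_card inter_subset_left).trans (mem_powersetCard.mp hT).2.le
          simpa using pow_sub_one_eq_sum_range_choose_mul (1 + d) hj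
        rw [sum_congr rfl fun T hT => sum_congr rfl fun T' hT' => hexpand T hT T' hT']
        rw [(sum_congr rfl fun T _ => sum_comm).trans sum_comm]
        refine sum_congr rfl fun s hs => ?_
        rw [← sum_congr rfl fun T _ => (sum_mul ..), ← sum_mul, mul_comm]
        congr 1
        exact_mod_cast sum_sum_choose_card_inter S (mem_range.mp hs)
    _ ≤ ∑ s ∈ range k, d ^ (s + 1) *
          ((m.choose k : ℝ) ^ 2 * ((2 * k ^ 2 / m) ^ (s + 1) / (s + 1)!)) := by
        refine sum_le_sum fun s hs => mul_le_mul_of_nonneg_left ?_ (by positivity)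
        exact choose_mul_choose_sub_sq_le (mem_range.mp hs) hkS
    _ = (m.choose k : ℝ) ^ 2 * ∑ s ∈ range k, (2 * d * k ^ 2 / m) ^ (s + 1) / (s + 1)! := by
        rw [mul_sum]
        refine sum_congr rfl fun s _ => ?_
        rw [mul_div_assoc, mul_div_assoc, mul_pow, mul_pow, mul_pow]
        ring
    _ ≤ (m.choose k : ℝ) ^ 2 * (2 * d * k ^ 2 / m * exp (2 * d)) := by
        gcongr
        exact (sum_range_pow_succ_div_factorial_le k (by positivity)).trans
          (mul_le_mul_of_nonneg_left (exp_le_exp.mpr ht) (by positivity))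
    _ = 2 * d * exp (2 * d) * k ^ 2 / m * (m.choose k : ℝ) ^ 2 := by ring

lemma pow_add_sub_le_inv_pow_mul_pow_mul_pow {x ε : ℝ} (hx : 0 ≤ x) (hε : 0 < ε)
    (hεx : 0 < x → ε ≤ x) {j k : ℕ} (hj : j ≤ k) (hk : 0 < k) :
    x ^ (k + (k - j)) ≤ ε⁻¹ ^ j * x ^ k * x ^ k := by
  rcases hx.eq_or_lt with rfl | hx
  · simp [zero_pow (by omega : k + (k - j) ≠ 0), zero_pow hk.ne']
  have hsplit : x ^ k * x ^ k = x ^ (k + (k - j)) * x ^ j := by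
    rw [← pow_add, ← pow_add]; congr 1; omega
  rw [mul_assoc, hsplit, ← mul_assoc, mul_right_comm]
  refine le_mul_of_one_le_left (by positivity) ?_
  rw [inv_pow, one_le_inv_mul₀ (by positivity)]
  exact pow_le_pow_left₀ hε.le (hεx hx) j

lemma sum_mul_abs_le_sqrt_sum_mul_sq {X : Type*} (s : Finset X) {w g : X → ℝ}
    (hw0 : ∀ x ∈ s, 0 ≤ w x) (hw1 : ∑ x ∈ s, w x = 1) :
    ∑ x ∈ s, w x * |g x| ≤ √(∑ x ∈ s, w x * g x ^ 2) := by
  refine le_sqrt_of_sq_le ?_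
  have hcs := sum_sq_le_sum_mul_sum_of_sq_le_mul s hw0
    (fun x hx => mul_nonneg (hw0 x hx) (sq_nonneg (g x)))
    (r := fun x => w x * |g x|) fun x _ => le_of_eq (by rw [mul_pow, sq_abs]; ring)
  rwa [hw1, one_mul] at hcs

lemma sum_abs_average_mul_sub_le {X β : Type*} [Fintype X] {w : X → ℝ} (hw0 : ∀ x, 0 ≤ w x)
    (hw1 : ∑ x, w x = 1) {P : Finset β} (hP : P.Nonempty) {f : β → X → ℝ}
    (hf : ∀ T ∈ P, ∑ x, w x * f T x = 1) :
    ∑ x, |1 / #P * ∑ T ∈ P, w x * f T x - w x|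
      ≤ √((∑ T ∈ P, ∑ T' ∈ P, (∑ x, w x * f T x * f T' x - 1)) / #P ^ 2) := by
  set g : X → ℝ := fun x => (∑ T ∈ P, (f T x - 1)) / #P
  have hN : (#P : ℝ) ≠ 0 := Nat.cast_ne_zero.mpr hP.card_pos.ne'
  have hdiff : ∀ x, 1 / #P * ∑ T ∈ P, w x * f T x - w x = w x * g x := by
    intro x
    simp only [g, sum_sub_distrib, sum_const, nsmul_eq_mul, mul_one, ← mul_sum]
    field_simp
  have hpair : ∀ T ∈ P, ∀ T' ∈ P,
      ∑ x, w x * ((f T x - 1) * (f T' x - 1)) = ∑ x, w x * f T x * f T' x - 1 := by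
    intro T hT T' hT'
    have hexp : ∀ x, w x * ((f T x - 1) * (f T' x - 1))
        = w x * f T x * f T' x - w x * f T x - w x * f T' x + w x := fun x => by ring
    simp only [hexp, sum_add_distrib, sum_sub_distrib, hf T hT, hf T' hT', hw1]
    ring
  have hsecond : ∑ x, w x * g x ^ 2
      = (∑ T ∈ P, ∑ T' ∈ P, (∑ x, w x * f T x * f T' x - 1)) / #P ^ 2 := by
    have hpt : ∀ x, w x * g x ^ 2
        = (∑ T ∈ P, ∑ T' ∈ P, w x * ((f T x - 1) * (f T' x - 1))) / #P ^ 2 := by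
      intro x
      rw [div_pow, sq, sum_mul_sum, mul_div_assoc']
      simp_rw [mul_sum]
    rw [← sum_congr rfl fun T hT => sum_congr rfl fun T' hT' => hpair T hT T' hT',
      sum_congr rfl fun x _ => hpt x, ← sum_div, sum_comm, sum_congr rfl fun T _ => sum_comm]
  calc ∑ x, |1 / #P * ∑ T ∈ P, w x * f T x - w x| = ∑ x, w x * |g x| := by
        simp only [hdiff, abs_mul, abs_of_nonneg (hw0 _)]
    _ ≤ √(∑ x, w x * g x ^ 2) := sum_mul_abs_le_sqrt_sum_mul_sq _ (fun x _ => hw0 x) hw1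
    _ = _ := by rw [hsecond]

section Weights

variable {Sig : Type*} [Fintype Sig] {μ : Sig → ℝ}

lemma exists_pos_of_sum_eq_one (hμ1 : ∑ a, μ a = 1) : ∃ a, 0 < μ a := by
  obtain ⟨a, -, ha⟩ := exists_lt_of_sum_lt (s := univ) (f := fun _ => (0 : ℝ)) (g := μ)
    (by simp [hμ1])
  exact ⟨a, ha⟩

lemma exists_pos_forall_pos_imp_le (hμ0 : ∀ a, 0 ≤ μ a) (hμ1 : ∑ a, μ a = 1) :
    ∃ ε, 0 < ε ∧ ε ≤ 1 ∧ ∀ a, 0 < μ a → ε ≤ μ a := by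
  obtain ⟨a₀, ha₀⟩ := exists_pos_of_sum_eq_one hμ1
  obtain ⟨b, hb, hmin⟩ := exists_min_image {a | 0 < μ a} μ ⟨a₀, by simpa using ha₀⟩
  refine ⟨μ b, (mem_filter.mp hb).2, ?_, fun a ha => hmin a (by simpa using ha)⟩
  exact hμ1 ▸ single_le_sum (fun a _ => hμ0 a) (mem_univ b)

lemma sum_pow_pos (hμ0 : ∀ a, 0 ≤ μ a) (hμ1 : ∑ a, μ a = 1) (k : ℕ) : 0 < ∑ a, μ a ^ k := by
  obtain ⟨a₀, ha₀⟩ := exists_pos_of_sum_eq_one hμ1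
  exact sum_pos' (fun a _ => pow_nonneg (hμ0 a) k) ⟨a₀, mem_univ a₀, pow_pos ha₀ k⟩

end Weights

lemma constOn_union_iff {ι Sig : Type*} [DecidableEq ι] {T T' : Finset ι}
    (h : (T ∩ T').Nonempty) (x : ι → Sig) :
    (∀ i ∈ T ∪ T', ∀ j ∈ T ∪ T', x i = x j) ↔
      (∀ i ∈ T, ∀ j ∈ T, x i = x j) ∧ ∀ i ∈ T', ∀ j ∈ T', x i = x j := by
  obtain ⟨i₀, hi₀⟩ := h
  simp only [mem_union, mem_inter] at *
  grind

section ProductWeight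

open Classical

variable {ι Sig : Type*} [Fintype ι] [DecidableEq ι] [Fintype Sig] {μ : Sig → ℝ}

lemma sum_prod_apply_eq_one (hμ1 : ∑ a, μ a = 1) : ∑ x : ι → Sig, ∏ i, μ (x i) = 1 := by
  rw [← Fintype.prod_sum (fun _ a => μ a), hμ1, prod_const_one]

lemma sum_ite_forall_eq_prod (hμ1 : ∑ a, μ a = 1) (U : Finset ι) (σ : ι → Sig) :
    ∑ y : ι → Sig, (if ∀ i ∈ U, y i = σ i then ∏ i, μ (y i) else 0) = ∏ i ∈ U, μ (σ i) := by
  have hfactor : ∀ y : ι → Sig, (if ∀ i ∈ U, y i = σ i then ∏ i, μ (y i) else 0)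
      = ∏ i, if i ∈ U → y i = σ i then μ (y i) else 0 := by
    intro y
    rw [prod_ite_zero]
    simp
  have hcoord : ∀ i, (∑ b, if i ∈ U → b = σ i then μ b else 0) = if i ∈ U then μ (σ i) else 1 := by
    intro i
    by_cases hi : i ∈ U
    · simp only [hi, true_imp_iff]
      simp
    · simpa only [hi, false_imp_iff, if_true, if_false] using hμ1
  rw [sum_congr rfl fun y _ => hfactor y]
  rw [← Fintype.prod_sum (fun i b => if i ∈ U → b = σ i then μ b else 0)]
  simp_rw [hcoord]
  rw [prod_ite_mem, univ_inter]

lemma ite_constOn_eq_sum {T : Finset ι} (hT : T.Nonempty) (x : ι → Sig) (r : ℝ) :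
    (if ∀ i ∈ T, ∀ j ∈ T, x i = x j then r else 0)
      = ∑ a, if ∀ i ∈ T, x i = a then r else 0 := by
  obtain ⟨i₀, hi₀⟩ := hT
  by_cases hx : ∀ i ∈ T, ∀ j ∈ T, x i = x j
  · have hiff : ∀ a, (∀ i ∈ T, x i = a) ↔ x i₀ = a := fun a =>
      ⟨fun ha => ha i₀ hi₀, fun ha i hi => (hx i hi i₀ hi₀).trans ha⟩
    rw [if_pos hx]
    simp [hiff]
  · rw [if_neg hx]
    refine (sum_eq_zero fun a _ => if_neg fun ha => hx fun i hi j hj => ?_).symm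
    rw [ha i hi, ha j hj]

lemma sum_ite_constOn (hμ1 : ∑ a, μ a = 1) {T : Finset ι} (hT : T.Nonempty) :
    ∑ y : ι → Sig, (if ∀ i ∈ T, ∀ j ∈ T, y i = y j then ∏ i, μ (y i) else 0)
      = ∑ a, μ a ^ #T := by
  simp_rw [ite_constOn_eq_sum hT]
  rw [sum_comm]
  simp [sum_ite_forall_eq_prod hμ1]

lemma sum_ite_constOn_and_constOn_of_disjoint (hμ1 : ∑ a, μ a = 1) {T T' : Finset ι}
    (hT : T.Nonempty) (hT' : T'.Nonempty) (hd : Disjoint T T') :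
    ∑ y : ι → Sig, (if (∀ i ∈ T, ∀ j ∈ T, y i = y j) ∧ ∀ i ∈ T', ∀ j ∈ T', y i = y j
        then ∏ i, μ (y i) else 0)
      = (∑ a, μ a ^ #T) * ∑ b, μ b ^ #T' := by
  have hpin : ∀ (a b : Sig) (y : ι → Sig),
      ((∀ i ∈ T, y i = a) ∧ ∀ i ∈ T', y i = b) ↔
        ∀ i ∈ T ∪ T', y i = if i ∈ T then a else b := by
    intro a b y
    simp only [mem_union]
    constructor
    · rintro ⟨ha, hb⟩ i (hi | hi)
      · rw [if_pos hi, ha i hi]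
      · rw [if_neg (disjoint_right.mp hd hi), hb i hi]
    · intro h
      exact ⟨fun i hi => by simpa [hi] using h i (Or.inl hi),
        fun i hi => by simpa [disjoint_right.mp hd hi] using h i (Or.inr hi)⟩
  have hsplit : ∀ y : ι → Sig,
      (if (∀ i ∈ T, ∀ j ∈ T, y i = y j) ∧ ∀ i ∈ T', ∀ j ∈ T', y i = y j
        then ∏ i, μ (y i) else 0)
      = ∑ a, ∑ b, if (∀ i ∈ T, y i = a) ∧ ∀ i ∈ T', y i = b then ∏ i, μ (y i) else 0 := by
    intro y
    rw [ite_and, ite_constOn_eq_sum hT]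
    refine sum_congr rfl fun a _ => ?_
    rw [ite_constOn_eq_sum hT']
    by_cases ha : ∀ i ∈ T, y i = a
    · simp only [eq_true ha, true_and, if_true]
    · simp only [eq_false ha, false_and, if_false, sum_const_zero]
  rw [sum_congr rfl fun y _ => hsplit y, sum_comm, sum_mul_sum]
  refine sum_congr rfl fun a _ => ?_
  rw [sum_comm]
  refine sum_congr rfl fun b _ => ?_
  simp_rw [hpin a b]
  rw [sum_ite_forall_eq_prod hμ1, prod_union hd, ← prod_const, ← prod_const]
  congr 1 <;> refine prod_congr rfl fun i hi => ?_
  · rw [if_pos hi]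
  · rw [if_neg (disjoint_right.mp hd hi)]

lemma sum_ite_constOn_and_constOn_le (hμ0 : ∀ a, 0 ≤ μ a) (hμ1 : ∑ a, μ a = 1) {ε : ℝ}
    (hε : 0 < ε) (hεμ : ∀ a, 0 < μ a → ε ≤ μ a) {k : ℕ} (hk : 0 < k) {T T' : Finset ι}
    (hT : #T = k) (hT' : #T' = k) :
    ∑ y : ι → Sig, (if (∀ i ∈ T, ∀ j ∈ T, y i = y j) ∧ ∀ i ∈ T', ∀ j ∈ T', y i = y j
        then ∏ i, μ (y i) else 0)
      ≤ ε⁻¹ ^ #(T ∩ T') * (∑ a, μ a ^ k) ^ 2 := by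
  have hTne : T.Nonempty := card_pos.mp (hT ▸ hk)
  have hT'ne : T'.Nonempty := card_pos.mp (hT' ▸ hk)
  by_cases hmeet : (T ∩ T').Nonempty
  · simp_rw [← constOn_union_iff hmeet]
    rw [sum_ite_constOn hμ1 (hTne.mono subset_union_left)]
    have hj : #(T ∩ T') ≤ k := hT ▸ card_le_card inter_subset_left
    have hunion : #(T ∪ T') = k + (k - #(T ∩ T')) := by
      have := card_union_add_card_inter T T'
      omega
    calc ∑ a, μ a ^ #(T ∪ T') ≤ ∑ a, ε⁻¹ ^ #(T ∩ T') * μ a ^ k * ∑ b, μ b ^ k := by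
          refine sum_le_sum fun a _ => hunion ▸ ?_
          refine (pow_add_sub_le_inv_pow_mul_pow_mul_pow (hμ0 a) hε (hεμ a) hj hk).trans ?_
          exact mul_le_mul_of_nonneg_left
            (single_le_sum (fun b _ => pow_nonneg (hμ0 b) k) (mem_univ a))
            (mul_nonneg (by positivity) (pow_nonneg (hμ0 a) k))
      _ = ε⁻¹ ^ #(T ∩ T') * (∑ a, μ a ^ k) ^ 2 := by
          rw [← sum_mul, ← mul_sum, sq, mul_assoc]
  · have hd : Disjoint T T' := disjoint_iff_inter_eq_empty.mpr (not_nonempty_iff_eq_empty.mp hmeet)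
    rw [sum_ite_constOn_and_constOn_of_disjoint hμ1 hTne hT'ne hd, hT, hT',
      not_nonempty_iff_eq_empty.mp hmeet, card_empty, pow_zero, one_mul, sq]

/-- The density of `μ^{⊗ι}` conditioned on `E_T = {x | x is constant on T}` with respect to
`μ^{⊗ι}`: for nonempty `T`, `μ^{⊗ι}(E_T) = ∑ a, μ a ^ #T`. -/
noncomputable def condDensity (μ : Sig → ℝ) (T : Finset ι) (x : ι → Sig) : ℝ :=
  if ∀ i ∈ T, ∀ j ∈ T, x i = x j then (∑ a, μ a ^ #T)⁻¹ else 0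

lemma ite_div_sum_eq_prod_mul_condDensity (hμ1 : ∑ a, μ a = 1) {T : Finset ι}
    (hT : T.Nonempty) (x : ι → Sig) :
    (if ∀ i ∈ T, ∀ j ∈ T, x i = x j then ∏ i, μ (x i) else 0) /
        ∑ y ∈ univ.filter (fun y : ι → Sig => ∀ i ∈ T, ∀ j ∈ T, y i = y j), ∏ i, μ (y i)
      = (∏ i, μ (x i)) * condDensity μ T x := by
  rw [sum_filter, sum_ite_constOn hμ1 hT, condDensity]
  split_ifs <;> simp [div_eq_mul_inv]

lemma sum_prod_mul_condDensity (hμ0 : ∀ a, 0 ≤ μ a) (hμ1 : ∑ a, μ a = 1) {T : Finset ι}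
    (hT : T.Nonempty) :
    ∑ x : ι → Sig, (∏ i, μ (x i)) * condDensity μ T x = 1 := by
  have hterm : ∀ x : ι → Sig, (∏ i, μ (x i)) * condDensity μ T x
      = (if ∀ i ∈ T, ∀ j ∈ T, x i = x j then ∏ i, μ (x i) else 0) * (∑ a, μ a ^ #T)⁻¹ := by
    intro x
    rw [condDensity]
    split_ifs <;> simp
  rw [sum_congr rfl fun x _ => hterm x, ← sum_mul, sum_ite_constOn hμ1 hT,
    mul_inv_cancel₀ (sum_pow_pos hμ0 hμ1 _).ne']

lemma sum_prod_mul_condDensity_mul_condDensity_le (hμ0 : ∀ a, 0 ≤ μ a) (hμ1 : ∑ a, μ a = 1)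
    {ε : ℝ} (hε : 0 < ε) (hεμ : ∀ a, 0 < μ a → ε ≤ μ a) {k : ℕ} (hk : 0 < k)
    {T T' : Finset ι} (hT : #T = k) (hT' : #T' = k) :
    ∑ x : ι → Sig, (∏ i, μ (x i)) * condDensity μ T x * condDensity μ T' x
      ≤ ε⁻¹ ^ #(T ∩ T') := by
  have hp := sum_pow_pos hμ0 hμ1 k
  have hterm : ∀ x : ι → Sig, (∏ i, μ (x i)) * condDensity μ T x * condDensity μ T' x
      = (if (∀ i ∈ T, ∀ j ∈ T, x i = x j) ∧ ∀ i ∈ T', ∀ j ∈ T', x i = x j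
          then ∏ i, μ (x i) else 0) / (∑ a, μ a ^ k) ^ 2 := by
    intro x
    rw [condDensity, condDensity, hT, hT', ite_and]
    split_ifs <;> simp [div_eq_mul_inv, sq, mul_assoc]
  rw [sum_congr rfl fun x _ => hterm x, ← sum_div, div_le_iff₀ (by positivity)]
  exact sum_ite_constOn_and_constOn_le hμ0 hμ1 hε hεμ hk hT hT'

end ProductWeight

open Classical in
/-- Let `(Σ, μ)` be a finite probability space. For `T ⊆ [n]` let
`E_T = {x : x is constant on T}`. There is a constant `C` (depending only on `μ`) such
that for every `n`, `S ⊆ [n]` and integer `1 ≤ k ≤ √|S|`, the distribution `ν` obtained by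
picking a uniformly random `T ⊆ S` with `|T| = k` and then sampling `x ∼ μ^{⊗n} | E_T`
satisfies `‖ν - μ^{⊗n}‖₁ ≤ C·k/√|S|`. -/
theorem force_equality_on_random_small_set_close
    {Sig : Type*} [Fintype Sig] (μ : Sig → ℝ)
    (hμ0 : ∀ a, 0 ≤ μ a) (hμ1 : ∑ a, μ a = 1) :
    ∃ C : ℝ, ∀ (n : ℕ) (S : Finset (Fin n)) (k : ℕ),
      1 ≤ k → (k : ℝ) ≤ Real.sqrt S.card →
      ∑ x : Fin n → Sig,
        |(1 / ((S.powersetCard k).card : ℝ)) *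
            ∑ T ∈ S.powersetCard k,
              (if ∀ i ∈ T, ∀ j ∈ T, x i = x j then ∏ i, μ (x i) else 0) /
                (∑ y ∈ Finset.univ.filter
                    (fun y : Fin n → Sig => ∀ i ∈ T, ∀ j ∈ T, y i = y j),
                  ∏ i, μ (y i))
          - ∏ i, μ (x i)|
        ≤ C * k / Real.sqrt S.card := by
  obtain ⟨ε, hε, hε1, hεμ⟩ := exists_pos_forall_pos_imp_le hμ0 hμ1
  set d := ε⁻¹ - 1
  have hd : 0 ≤ d := sub_nonneg.mpr (one_le_inv₀ hε |>.mpr hε1)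
  refine ⟨√(2 * d * exp (2 * d)), fun n S k hk hkS => ?_⟩
  have hkS' : k ^ 2 ≤ #S := by exact_mod_cast (Real.le_sqrt (by positivity) (by positivity)).mp hkS
  have hmem : ∀ T ∈ S.powersetCard k, #T = k ∧ T.Nonempty := fun T hT =>
    ⟨(mem_powersetCard.mp hT).2, card_pos.mp ((mem_powersetCard.mp hT).2 ▸ hk)⟩
  have hP : (S.powersetCard k).Nonempty := powersetCard_nonempty.mpr (by nlinarith)
  calc _ = ∑ x : Fin n → Sig, |1 / #(S.powersetCard k) *
          ∑ T ∈ S.powersetCard k, (∏ i, μ (x i)) * condDensity μ T x - ∏ i, μ (x i)| := by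
        refine sum_congr rfl fun x _ => ?_
        congr 3
        refine sum_congr rfl fun T hT => ?_
        -- the decidability instances elaborated for `Fin n` differ from the generic ones
        convert ite_div_sum_eq_prod_mul_condDensity hμ1 (hmem T hT).2 x
    _ ≤ √((∑ T ∈ S.powersetCard k, ∑ T' ∈ S.powersetCard k, ((1 + d) ^ #(T ∩ T') - 1)) /
          #(S.powersetCard k) ^ 2) := by
        refine (sum_abs_average_mul_sub_le (fun x => prod_nonneg fun i _ => hμ0 (x i))
          (sum_prod_apply_eq_one hμ1) hP
          fun T hT => sum_prod_mul_condDensity hμ0 hμ1 (hmem T hT).2).trans ?_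
        refine sqrt_le_sqrt (div_le_div_of_nonneg_right (sum_le_sum fun T hT => sum_le_sum
          fun T' hT' => sub_le_sub_right ?_ 1) (by positivity))
        rw [add_sub_cancel]
        exact sum_prod_mul_condDensity_mul_condDensity_le hμ0 hμ1 hε hεμ hk (hmem T hT).1
          (hmem T' hT').1
    _ ≤ √(2 * d * exp (2 * d) * k ^ 2 / #S) :=
        sqrt_le_sqrt (sum_sum_one_add_pow_card_inter_sub_one_div_le S hkS' hd)
    _ = √(2 * d * exp (2 * d)) * k / √(#S) := by
        rw [sqrt_div' _ (by positivity), sqrt_mul (by positivity), sqrt_sq (by positivity)]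
end

section
/- Let $(\Sigma, \mu)$ be a finite probability space, $n \in \mathbb{N}$, let $\mathcal{R}$ be an $(m, \epsilon)$-generalized random restriction over $\Sigma^n$, and let $E \subseteq \Sigma^n$ be an event with $\Pr_{\mu^{\otimes n}}[E] > \epsilon$. Define the conditional generalized restriction $\mathcal{R}|E$ by $(\mathcal{R}|E)[\rho] = \frac{\Pr[E | E_\rho] \cdot \mathcal{R}[\rho]}{\mathbb{E}_{\rho' \sim \mathcal{R}}[\Pr[E | E_{\rho'}]]}$. Then for every $\rho$: $\left|(\mathcal{R}|E)[\rho] - \frac{\Pr[E|E_\rho] \cdot \mathcal{R}[\rho]}{\Pr[E]}\right| \le (\mathcal{R}|E)[\rho] \cdot \frac{\epsilon}{\Pr[E]}$; moreover $\left\| \mathbb{E}_{\rho \sim \mathcal{R}|E}[\mu^{\otimes n} | E_\rho, E] - (\mu^{\otimes n} | E) \right\|_1 \le \frac{2\epsilon}{\Pr[E]}$. -/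
/-- A generalized restriction `ρ = (T₁, …, T_m, I, z)` on `Σ^n`: the nonempty sets
`T₁, …, T_m` together with `I` form a disjoint partition of `[n]`, and `z` records the
fixed values on `I` (only the values of `z` on `I` are relevant). -/
structure GenRestr (Sig : Type*) (n : ℕ) where
  m : ℕ
  T : Fin m → Finset (Fin n)
  I : Finset (Fin n)
  z : Fin n → Sig
  hT : ∀ j, (T j).Nonempty
  hdisj : ∀ j j', j ≠ j' → Disjoint (T j) (T j')
  hdisjI : ∀ j, Disjoint (T j) I
  hcover : ∀ i : Fin n, i ∈ I ∨ ∃ j, i ∈ T j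

/-- The event `E_ρ ⊆ Σ^n` of a generalized restriction: all coordinates inside each class
`T_j` agree, and the coordinates in `I` take the prescribed values. -/
def GenRestr.event {Sig : Type*} {n : ℕ} (ρ : GenRestr Sig n) : Set (Fin n → Sig) :=
  {x | (∀ j, ∀ i ∈ ρ.T j, ∀ i' ∈ ρ.T j, x i = x i') ∧ ∀ i ∈ ρ.I, x i = ρ.z i}

open Classical in
/-- The probability of an event `A ⊆ Σ^n` under the product measure `μ^{⊗n}`. -/
noncomputable def prOf {Sig : Type*} [Fintype Sig] {n : ℕ} (μ : Sig → ℝ)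
    (A : Set (Fin n → Sig)) : ℝ :=
  ∑ x : Fin n → Sig, if x ∈ A then ∏ i, μ (x i) else 0

open Classical in
/-- The conditional distribution `μ^{⊗n} | A` evaluated at `x`. -/
noncomputable def condDist {Sig : Type*} [Fintype Sig] {n : ℕ} (μ : Sig → ℝ)
    (A : Set (Fin n → Sig)) (x : Fin n → Sig) : ℝ :=
  (if x ∈ A then ∏ i, μ (x i) else 0) / prOf μ A

/-!
Write `f = 𝔼_ρ[μ^{⊗n} | E_ρ]` and `g = μ^{⊗n}`, so that `‖f - g‖₁ ≤ ε`. Since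
`Pr[E|E_ρ] · (μ^{⊗n} | E_ρ ∩ E) = 1_E · (μ^{⊗n} | E_ρ)`, the distribution
`𝔼_{ρ∼𝓡|E}[μ^{⊗n} | E_ρ, E]` is `1_E f` normalized, while `μ^{⊗n} | E` is `1_E g` normalized.
The normalizing constants `S = 𝔼_ρ[Pr[E|E_ρ]]` and `Pr[E]` differ by at most
`‖1_E f - 1_E g‖₁ ≤ ε`, which gives the first bound; for the same reason normalizing
`1_E f` and `1_E g` at most doubles their `ℓ¹`-distance, measured relative to `Pr[E]`.
-/

open Finset

section Normalization

theorem abs_div_sub_div_of_nonneg {q S P : ℝ} (hq : 0 ≤ q) (hS : 0 < S) (hP : 0 < P) :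
    |q / S - q / P| = q / S * (|S - P| / P) := by
  have hsplit : q / S - q / P = q / S * ((P - S) / P) := by
    field_simp
  rw [hsplit, abs_mul, abs_of_nonneg (div_nonneg hq hS.le), abs_div, abs_of_pos hP, abs_sub_comm]

variable {α : Type*}

theorem abs_indicator_sub_indicator_le (E : Set α) (f g : α → ℝ) (x : α) :
    |E.indicator f x - E.indicator g x| ≤ |f x - g x| := by
  by_cases hx : x ∈ E <;> simp [hx]

variable [Fintype α]

theorem abs_sum_sub_sum_le (F G : α → ℝ) : |∑ x, F x - ∑ x, G x| ≤ ∑ x, |F x - G x| := by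
  rw [← sum_sub_distrib]
  exact abs_sum_le_sum_abs _ _

theorem sum_abs_div_sum_sub_div_sum_le (F G : α → ℝ) (hF : ∀ x, 0 ≤ F x)
    (hS : 0 < ∑ x, F x) (hP : 0 < ∑ x, G x) :
    ∑ x, |F x / ∑ y, F y - G x / ∑ y, G y| ≤ 2 * (∑ x, |F x - G x|) / ∑ x, G x := by
  set S := ∑ y, F y
  set P := ∑ y, G y
  have hpoint : ∀ x, |F x / S - G x / P| ≤ F x / S * (|S - P| / P) + |F x - G x| / P := by
    intro x
    have hsplit : F x / S - G x / P = (F x / S - F x / P) + (F x - G x) / P := by ring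
    rw [hsplit]
    refine (abs_add_le _ _).trans ?_
    rw [abs_div_sub_div_of_nonneg (hF x) hS hP, abs_div, abs_of_pos hP]
  calc ∑ x, |F x / S - G x / P|
      ≤ ∑ x, (F x / S * (|S - P| / P) + |F x - G x| / P) := sum_le_sum fun x _ => hpoint x
    _ = |S - P| / P + (∑ x, |F x - G x|) / P := by
        rw [sum_add_distrib, ← sum_mul, ← sum_div, div_self hS.ne', one_mul, sum_div]
    _ ≤ (∑ x, |F x - G x|) / P + (∑ x, |F x - G x|) / P := by
        gcongr
        exact abs_sum_sub_sum_le F G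
    _ = 2 * (∑ x, |F x - G x|) / P := by ring

end Normalization

section ProductMeasure

variable {Sig : Type*} {n : ℕ} {μ : Sig → ℝ}

theorem indicator_prod_nonneg (hμ : ∀ a, 0 ≤ μ a) (A : Set (Fin n → Sig)) (x : Fin n → Sig) :
    0 ≤ A.indicator (fun y => ∏ i, μ (y i)) x :=
  Set.indicator_nonneg (fun y _ => prod_nonneg fun i _ => hμ (y i)) x

variable [Fintype Sig]

theorem prOf_eq_sum_indicator (A : Set (Fin n → Sig)) :
    prOf μ A = ∑ x, A.indicator (fun y => ∏ i, μ (y i)) x :=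
  rfl

theorem condDist_eq_indicator_div (A : Set (Fin n → Sig)) (x : Fin n → Sig) :
    condDist μ A x = A.indicator (fun y => ∏ i, μ (y i)) x / prOf μ A :=
  rfl

theorem prOf_nonneg (hμ : ∀ a, 0 ≤ μ a) (A : Set (Fin n → Sig)) : 0 ≤ prOf μ A :=
  sum_nonneg fun x _ => indicator_prod_nonneg hμ A x

theorem condDist_nonneg (hμ : ∀ a, 0 ≤ μ a) (A : Set (Fin n → Sig)) (x : Fin n → Sig) :
    0 ≤ condDist μ A x :=
  div_nonneg (indicator_prod_nonneg hμ A x) (prOf_nonneg hμ A)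

theorem prod_le_prOf (hμ : ∀ a, 0 ≤ μ a) {A : Set (Fin n → Sig)} {x : Fin n → Sig}
    (hx : x ∈ A) : ∏ i, μ (x i) ≤ prOf μ A := by
  rw [prOf_eq_sum_indicator, ← Set.indicator_of_mem hx (fun y => ∏ i, μ (y i))]
  exact single_le_sum (fun y _ => indicator_prod_nonneg hμ A y) (mem_univ x)

theorem sum_indicator_condDist (E A : Set (Fin n → Sig)) :
    ∑ x, E.indicator (condDist μ A) x = prOf μ (E ∩ A) / prOf μ A := by
  rw [prOf_eq_sum_indicator (E ∩ A), sum_div]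
  refine sum_congr rfl fun x _ => ?_
  by_cases hE : x ∈ E <;> by_cases hA : x ∈ A <;> simp [condDist_eq_indicator_div, hE, hA]

theorem condProb_mul_condDist_inter (hμ : ∀ a, 0 ≤ μ a) (E A : Set (Fin n → Sig))
    (x : Fin n → Sig) :
    prOf μ (E ∩ A) / prOf μ A * condDist μ (E ∩ A) x = E.indicator (condDist μ A) x := by
  by_cases hx : x ∈ E ∩ A
  swap
  · have hcond : E.indicator (condDist μ A) x = 0 := by
      by_cases hE : x ∈ E
      · rw [Set.indicator_of_mem hE, condDist_eq_indicator_div,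
          Set.indicator_of_notMem (fun hA => hx ⟨hE, hA⟩), zero_div]
      · exact Set.indicator_of_notMem hE _
    rw [hcond, condDist_eq_indicator_div, Set.indicator_of_notMem hx, zero_div, mul_zero]
  rw [Set.indicator_of_mem hx.1, condDist_eq_indicator_div, condDist_eq_indicator_div,
    Set.indicator_of_mem hx, Set.indicator_of_mem hx.2]
  by_cases hEA : prOf μ (E ∩ A) = 0
  · have hmass : ∏ i, μ (x i) = 0 :=
      le_antisymm (hEA ▸ prod_le_prOf hμ hx) (prod_nonneg fun i _ => hμ (x i))
    simp [hEA, hmass]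
  · rw [div_mul_div_comm, mul_comm (prOf μ (E ∩ A)), mul_div_mul_right _ _ hEA]

variable {ι : Type*} [Fintype ι]

theorem sum_mul_condProb_eq_sum_indicator (w : ι → ℝ) (A : ι → Set (Fin n → Sig))
    (E : Set (Fin n → Sig)) :
    ∑ a, w a * (prOf μ (E ∩ A a) / prOf μ (A a))
      = ∑ x, E.indicator (fun y => ∑ a, w a * condDist μ (A a) y) x := by
  simp_rw [← sum_indicator_condDist, mul_sum]
  rw [sum_comm]
  refine sum_congr rfl fun x _ => ?_
  by_cases hx : x ∈ E <;> simp [hx]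

theorem sum_mul_condProb_mul_condDist_inter (hμ : ∀ a, 0 ≤ μ a) (w : ι → ℝ)
    (A : ι → Set (Fin n → Sig)) (E : Set (Fin n → Sig)) (x : Fin n → Sig) :
    ∑ a, w a * (prOf μ (E ∩ A a) / prOf μ (A a)) * condDist μ (E ∩ A a) x
      = E.indicator (fun y => ∑ a, w a * condDist μ (A a) y) x := by
  simp_rw [mul_assoc, condProb_mul_condDist_inter hμ]
  by_cases hx : x ∈ E <;> simp [hx]

end ProductMeasure

theorem conditional_generalized_random_restriction_properties_general
    {Sig : Type*} [Fintype Sig] {n : ℕ} (μ : Sig → ℝ)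
    (hμ0 : ∀ a, 0 ≤ μ a)
    {ι : Type*} [Fintype ι] (w : ι → ℝ) (hw0 : ∀ a, 0 ≤ w a)
    (R : ι → GenRestr Sig n) (ε : ℝ)
    (hR : ∑ x : Fin n → Sig,
        |∑ a, w a * condDist μ (R a).event x - ∏ i, μ (x i)| ≤ ε)
    (E : Set (Fin n → Sig)) (hE : ε < prOf μ E) :
    (∀ a : ι,
      |w a * (prOf μ (E ∩ (R a).event) / prOf μ (R a).event) /
          (∑ b, w b * (prOf μ (E ∩ (R b).event) / prOf μ (R b).event))
        - (prOf μ (E ∩ (R a).event) / prOf μ (R a).event) * w a / prOf μ E|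
        ≤ (w a * (prOf μ (E ∩ (R a).event) / prOf μ (R a).event) /
            (∑ b, w b * (prOf μ (E ∩ (R b).event) / prOf μ (R b).event)))
            * (ε / prOf μ E)) ∧
    ∑ x : Fin n → Sig,
      |(∑ a, (w a * (prOf μ (E ∩ (R a).event) / prOf μ (R a).event) /
              (∑ b, w b * (prOf μ (E ∩ (R b).event) / prOf μ (R b).event)))
            * condDist μ (E ∩ (R a).event) x)
        - condDist μ E x| ≤ 2 * ε / prOf μ E := by
  set f : (Fin n → Sig) → ℝ := fun y => ∑ a, w a * condDist μ (R a).event y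
  set g : (Fin n → Sig) → ℝ := fun y => ∏ i, μ (y i)
  set S := ∑ b, w b * (prOf μ (E ∩ (R b).event) / prOf μ (R b).event)
  have hSf : S = ∑ x, E.indicator f x :=
    sum_mul_condProb_eq_sum_indicator w (fun a => (R a).event) E
  have hPg : prOf μ E = ∑ x, E.indicator g x := prOf_eq_sum_indicator E
  have hdist : ∑ x, |E.indicator f x - E.indicator g x| ≤ ε :=
    (sum_le_sum fun x _ => abs_indicator_sub_indicator_le E f g x).trans hR
  have hP : 0 < prOf μ E := ((sum_nonneg fun x _ => abs_nonneg _).trans hdist).trans_lt hE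
  have hSP : |S - prOf μ E| ≤ ε := by
    rw [hSf, hPg]
    exact (abs_sum_sub_sum_le _ _).trans hdist
  have hS : 0 < S := by linarith [neg_abs_le (S - prOf μ E)]
  constructor
  · intro a
    have hq : 0 ≤ w a * (prOf μ (E ∩ (R a).event) / prOf μ (R a).event) :=
      mul_nonneg (hw0 a) (div_nonneg (prOf_nonneg hμ0 _) (prOf_nonneg hμ0 _))
    rw [mul_comm _ (w a), abs_div_sub_div_of_nonneg hq hS hP]
    exact mul_le_mul_of_nonneg_left (div_le_div_of_nonneg_right hSP hP.le) (div_nonneg hq hS.le)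
  · have hmix : ∀ x, ∑ a, w a * (prOf μ (E ∩ (R a).event) / prOf μ (R a).event) / S
        * condDist μ (E ∩ (R a).event) x = E.indicator f x / S := fun x => by
      simp_rw [div_mul_eq_mul_div, ← sum_div, sum_mul_condProb_mul_condDist_inter hμ0]
      rfl
    have hf : ∀ x, 0 ≤ E.indicator f x := Set.indicator_nonneg fun y _ =>
      sum_nonneg fun a _ => mul_nonneg (hw0 a) (condDist_nonneg hμ0 _ y)
    have hnorm := sum_abs_div_sum_sub_div_sum_le _ _ hf (hSf ▸ hS) (hPg ▸ hP)
    rw [← hSf, ← hPg] at hnorm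
    simp only [hmix, condDist_eq_indicator_div E]
    exact hnorm.trans (by gcongr)

/-- Let `𝓡` be an `(m, ε)`-generalized random restriction (a finitely
supported distribution `w` on generalized restrictions `R a`, each with at least `m` free
coordinates, whose average conditional distribution is `ε`-close to `μ^{⊗n}` in `ℓ¹`), and
let `E` be an event with `Pr[E] > ε`. Defining the conditional generalized random
restriction `(𝓡|E)[ρ] = Pr[E|E_ρ]·𝓡[ρ] / 𝔼_{ρ'}[Pr[E|E_{ρ'}]]`, we have for every `ρ`:
`|(𝓡|E)[ρ] - Pr[E|E_ρ]·𝓡[ρ]/Pr[E]| ≤ (𝓡|E)[ρ]·ε/Pr[E]`, and moreover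
`‖𝔼_{ρ∼𝓡|E}[μ^{⊗n}|E_ρ, E] - (μ^{⊗n}|E)‖₁ ≤ 2ε/Pr[E]`. -/
theorem conditional_generalized_random_restriction_properties
    {Sig : Type*} [Fintype Sig] {n : ℕ} (μ : Sig → ℝ)
    (hμ0 : ∀ a, 0 ≤ μ a) (hμ1 : ∑ a, μ a = 1)
    {ι : Type*} [Fintype ι] (w : ι → ℝ) (hw0 : ∀ a, 0 ≤ w a) (hw1 : ∑ a, w a = 1)
    (R : ι → GenRestr Sig n) (m : ℕ) (ε : ℝ) (hε : 0 ≤ ε)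
    (hfree : ∀ a, m ≤ (R a).m)
    (hR : ∑ x : Fin n → Sig,
        |∑ a, w a * condDist μ (R a).event x - ∏ i, μ (x i)| ≤ ε)
    (E : Set (Fin n → Sig)) (hE : ε < prOf μ E) :
    (∀ a : ι,
      |w a * (prOf μ (E ∩ (R a).event) / prOf μ (R a).event) /
          (∑ b, w b * (prOf μ (E ∩ (R b).event) / prOf μ (R b).event))
        - (prOf μ (E ∩ (R a).event) / prOf μ (R a).event) * w a / prOf μ E|
        ≤ (w a * (prOf μ (E ∩ (R a).event) / prOf μ (R a).event) /
            (∑ b, w b * (prOf μ (E ∩ (R b).event) / prOf μ (R b).event)))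
            * (ε / prOf μ E)) ∧
    ∑ x : Fin n → Sig,
      |(∑ a, (w a * (prOf μ (E ∩ (R a).event) / prOf μ (R a).event) /
              (∑ b, w b * (prOf μ (E ∩ (R b).event) / prOf μ (R b).event)))
            * condDist μ (E ∩ (R a).event) x)
        - condDist μ E x| ≤ 2 * ε / prOf μ E :=
  conditional_generalized_random_restriction_properties_general μ hμ0 w hw0 R ε hR E hE
end

section
/- Let $\mathcal{G} = (\mathcal{X}, \mathcal{A}, Q, V)$ be a $k$-player game, $n \in \mathbb{N}$, and fix an optimal strategy for the repeated game $\mathcal{G}^{\otimes n}$; for $i \in [n]$ let $\mathrm{Win}_i$ be the event that the strategy wins coordinate $i$. Suppose $\epsilon, \alpha \in (0,1]$ with $\alpha \ge 2^{-n}$ are such that for every product event $E = E^1 \times \dots \times E^k \subseteq \mathcal{X}^{\otimes n}$ with $\Pr_{Q^{\otimes n}}[E] \ge \alpha$, there exists a coordinate $i \in [n]$ with $\Pr[\mathrm{Win}_i \mid E] \le 1 - \epsilon$. Then $\mathrm{val}(\mathcal{G}^{\otimes n}) \le (1 - \epsilon/2)^{\frac{\log_2(1/\alpha)}{2 \log_2(4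 |\mathcal{X}||\mathcal{A}|)}}$. -/
open Classical

set_option linter.unusedSectionVars false
set_option maxHeartbeats 1000000

namespace ParRepAux

variable {k n : ℕ} {X A : Fin k → Type*} [∀ j, Fintype (X j)] [∀ j, Fintype (A j)]

def ans (g : ∀ j, (Fin n → X j) → Fin n → A j) (x : Fin n → ∀ j, X j) (i : Fin n) :
    ∀ j, A j := fun j => g j (fun i' => x i' j) i

def memE (E : ∀ j, Set (Fin n → X j)) (x : Fin n → ∀ j, X j) : Prop :=
  ∀ j, (fun i => x i j) ∈ E j

noncomputable def meas (Q : (∀ j, X j) → ℝ) (E : ∀ j, Set (Fin n → X j)) : ℝ :=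
  ∑ x : Fin n → ∀ j, X j, if memE E x then ∏ i, Q (x i) else 0

def winAll (V : (∀ j, X j) → (∀ j, A j) → Bool) (g : ∀ j, (Fin n → X j) → Fin n → A j)
    (x : Fin n → ∀ j, X j) : Prop := ∀ i, V (x i) (ans g x i) = true

noncomputable def wmeas (Q : (∀ j, X j) → ℝ) (V : (∀ j, X j) → (∀ j, A j) → Bool)
    (g : ∀ j, (Fin n → X j) → Fin n → A j) (E : ∀ j, Set (Fin n → X j)) : ℝ :=
  ∑ x : Fin n → ∀ j, X j, if memE E x ∧ winAll V g x then ∏ i, Q (x i) else 0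

noncomputable def wini (Q : (∀ j, X j) → ℝ) (V : (∀ j, X j) → (∀ j, A j) → Bool)
    (g : ∀ j, (Fin n → X j) → Fin n → A j) (i : Fin n) (E : ∀ j, Set (Fin n → X j)) : ℝ :=
  ∑ x : Fin n → ∀ j, X j, if memE E x ∧ V (x i) (ans g x i) = true then ∏ i', Q (x i') else 0

def child (g : ∀ j, (Fin n → X j) → Fin n → A j) (E : ∀ j, Set (Fin n → X j)) (i : Fin n)
    (q : ∀ j, X j) (a : ∀ j, A j) : ∀ j, Set (Fin n → X j) :=
  fun j => {y | y ∈ E j ∧ y i = q j ∧ g j y i = a j}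

lemma memE_child {g : ∀ j, (Fin n → X j) → Fin n → A j} {E : ∀ j, Set (Fin n → X j)}
    {i : Fin n} {q : ∀ j, X j} {a : ∀ j, A j} {x : Fin n → ∀ j, X j} :
    memE (child g E i q a) x ↔ memE E x ∧ x i = q ∧ ans g x i = a := by
  unfold memE child ans
  constructor
  · intro h
    exact ⟨fun j => (h j).1, funext fun j => (h j).2.1, funext fun j => (h j).2.2⟩
  · rintro ⟨h1, h2, h3⟩ j
    exact ⟨h1 j, congrFun h2 j, congrFun h3 j⟩

lemma sum_split (V : (∀ j, X j) → (∀ j, A j) → Bool) (g : ∀ j, (Fin n → X j) → Fin n → A j)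
    (i : Fin n) (F : (Fin n → ∀ j, X j) → ℝ) (P : (Fin n → ∀ j, X j) → Prop)
    (hP : ∀ x, P x → V (x i) (ans g x i) = true) :
    (∑ x : Fin n → ∀ j, X j, if P x then F x else 0)
      = ∑ p : (∀ j, X j) × (∀ j, A j), if V p.1 p.2 = true then
          (∑ x : Fin n → ∀ j, X j, if P x ∧ x i = p.1 ∧ ans g x i = p.2 then F x else 0)
        else 0 := by
  have h1 : ∀ p : (∀ j, X j) × (∀ j, A j),
      (if V p.1 p.2 = true then
          (∑ x : Fin n → ∀ j, X j, if P x ∧ x i = p.1 ∧ ans g x i = p.2 then F x else 0)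
        else 0)
      = ∑ x : Fin n → ∀ j, X j,
          if (P x ∧ x i = p.1 ∧ ans g x i = p.2) ∧ V p.1 p.2 = true then F x else 0 := by
    intro p
    split_ifs with h
    · exact Finset.sum_congr rfl fun x _ => by simp [h]
    · exact (Finset.sum_eq_zero fun x _ => if_neg fun hc => h hc.2).symm
  rw [Finset.sum_congr rfl fun p _ => h1 p, Finset.sum_comm]
  refine Finset.sum_congr rfl fun x _ => ?_
  by_cases hp : P x
  · rw [Fintype.sum_eq_single (⟨x i, ans g x i⟩ : (∀ j, X j) × (∀ j, A j)) ?_]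
    · simp [hp, hP x hp]
    · intro p hne
      exact if_neg fun hc => hne (Prod.ext hc.1.2.1.symm hc.1.2.2.symm)
  · simp [hp]

variable (Q : (∀ j, X j) → ℝ) (V : (∀ j, X j) → (∀ j, A j) → Bool)
  (g : ∀ j, (Fin n → X j) → Fin n → A j)

lemma sum_ite_congr {ι : Type*} [Fintype ι] (P P' : ι → Prop) [∀ x, Decidable (P x)]
    [∀ x, Decidable (P' x)] (F F' : ι → ℝ) (h : ∀ x, P x ↔ P' x) (hF : ∀ x, F x = F' x) :
    (∑ x, if P x then F x else 0) = ∑ x, if P' x then F' x else 0 :=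
  Finset.sum_congr rfl fun x _ => if_congr (h x) (hF x) rfl

lemma ite_le_ite {P1 P2 : Prop} [Decidable P1] [Decidable P2] (w : ℝ) (hw : 0 ≤ w) (h : P1 → P2) :
    (if P1 then w else 0) ≤ if P2 then w else 0 := by
  split_ifs with h1 h2
  · exact le_rfl
  · exact absurd (h h1) h2
  · exact hw
  · exact le_rfl

lemma wt_nonneg (hQ0 : ∀ x, 0 ≤ Q x) (x : Fin n → ∀ j, X j) : 0 ≤ ∏ i, Q (x i) :=
  Finset.prod_nonneg fun _ _ => hQ0 _

lemma meas_nonneg (hQ0 : ∀ x, 0 ≤ Q x) (E : ∀ j, Set (Fin n → X j)) : 0 ≤ meas Q E :=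
  Finset.sum_nonneg fun x _ => by
    split_ifs
    · exact wt_nonneg Q hQ0 x
    · exact le_rfl

lemma wmeas_nonneg (hQ0 : ∀ x, 0 ≤ Q x) (E : ∀ j, Set (Fin n → X j)) : 0 ≤ wmeas Q V g E :=
  Finset.sum_nonneg fun x _ => by
    split_ifs
    · exact wt_nonneg Q hQ0 x
    · exact le_rfl

lemma wini_nonneg (hQ0 : ∀ x, 0 ≤ Q x) (i : Fin n) (E : ∀ j, Set (Fin n → X j)) :
    0 ≤ wini Q V g i E :=
  Finset.sum_nonneg fun x _ => by
    split_ifs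
    · exact wt_nonneg Q hQ0 x
    · exact le_rfl

lemma wmeas_le_meas (hQ0 : ∀ x, 0 ≤ Q x) (E : ∀ j, Set (Fin n → X j)) :
    wmeas Q V g E ≤ meas Q E :=
  Finset.sum_le_sum fun x _ => ite_le_ite _ (wt_nonneg Q hQ0 x) And.left

lemma wmeas_eq (i : Fin n) (E : ∀ j, Set (Fin n → X j)) :
    wmeas Q V g E = ∑ p : (∀ j, X j) × (∀ j, A j),
      if V p.1 p.2 = true then wmeas Q V g (child g E i p.1 p.2) else 0 := by
  have key := sum_split V g i (fun x => ∏ i, Q (x i))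
    (fun x => memE E x ∧ winAll V g x) (fun x hx => hx.2 i)
  unfold wmeas
  refine Eq.trans ?_ (Eq.trans key ?_)
  · exact Finset.sum_congr rfl fun x _ => by congr! 1
  · refine Finset.sum_congr rfl fun p _ => ?_
    by_cases h : V p.1 p.2 = true
    · rw [if_pos h, if_pos h]
      refine Finset.sum_congr rfl fun x _ => ?_
      congr! 1
      rw [memE_child]
      tauto
    · rw [if_neg h, if_neg h]

lemma wini_eq (i : Fin n) (E : ∀ j, Set (Fin n → X j)) :
    wini Q V g i E = ∑ p : (∀ j, X j) × (∀ j, A j),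
      if V p.1 p.2 = true then meas Q (child g E i p.1 p.2) else 0 := by
  have key := sum_split V g i (fun x => ∏ i', Q (x i'))
    (fun x => memE E x ∧ V (x i) (ans g x i) = true) (fun x hx => hx.2)
  unfold wini
  refine Eq.trans ?_ (Eq.trans key ?_)
  · exact Finset.sum_congr rfl fun x _ => by congr! 1
  · refine Finset.sum_congr rfl fun p _ => ?_
    by_cases h : V p.1 p.2 = true
    · rw [if_pos h, if_pos h]
      unfold meas
      refine Finset.sum_congr rfl fun x _ => ?_
      congr! 1
      rw [memE_child]
      constructor
      · rintro ⟨⟨h1, _⟩, h2, h3⟩; exact ⟨h1, h2, h3⟩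
      · rintro ⟨h1, h2, h3⟩
        exact ⟨⟨h1, by rw [h2, h3]; exact h⟩, h2, h3⟩
    · rw [if_neg h, if_neg h]

lemma meas_child_le_wini (hQ0 : ∀ x, 0 ≤ Q x) (i : Fin n) (E : ∀ j, Set (Fin n → X j))
    {q : ∀ j, X j} {a : ∀ j, A j} (hV : V q a = true) :
    meas Q (child g E i q a) ≤ wini Q V g i E := by
  refine Finset.sum_le_sum fun x _ => ite_le_ite _ (wt_nonneg Q hQ0 x) ?_
  intro h
  rcases memE_child.mp h with ⟨h1, h2, h3⟩
  exact ⟨h1, by rw [h2, h3]; exact hV⟩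

noncomputable def gset (E : ∀ j, Set (Fin n → X j)) : Finset (Fin n → ∀ j, X j) :=
  Finset.univ.filter (memE E)

lemma meas_eq_gset (E : ∀ j, Set (Fin n → X j)) :
    meas Q E = ∑ x ∈ gset E, ∏ i, Q (x i) := by
  rw [gset, Finset.sum_filter, meas]

lemma gset_child_subset (i : Fin n) (E : ∀ j, Set (Fin n → X j)) (q : ∀ j, X j) (a : ∀ j, A j) :
    gset (child g E i q a) ⊆ gset E := by
  intro x hx
  rw [gset, Finset.mem_filter] at hx ⊢
  exact ⟨hx.1, (memE_child.mp hx.2).1⟩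

lemma sum_rpow_le {ι : Type*} (s : Finset ι) (f : ι → ℝ) (hf : ∀ i ∈ s, 0 ≤ f i)
    {t : ℝ} (ht0 : 0 < t) (ht1 : t ≤ 1) :
    ∑ i ∈ s, f i ^ t ≤ (s.card : ℝ) ^ (1 - t) * (∑ i ∈ s, f i) ^ t := by
  have htne : t ≠ 0 := ne_of_gt ht0
  have hp : 1 ≤ 1 / t := by
    rw [le_div_iff₀ ht0]; linarith
  have h := Real.rpow_sum_le_const_mul_sum_rpow_of_nonneg (f := fun i => f i ^ t) s hp
    (fun i hi => Real.rpow_nonneg (hf i hi) t)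
  have hsimp : ∀ i ∈ s, (f i ^ t) ^ (1 / t) = f i := by
    intro i hi
    rw [← Real.rpow_mul (hf i hi), mul_one_div, div_self htne, Real.rpow_one]
  rw [Finset.sum_congr rfl hsimp] at h
  have hS : 0 ≤ ∑ i ∈ s, f i ^ t :=
    Finset.sum_nonneg fun i hi => Real.rpow_nonneg (hf i hi) t
  have hsum : 0 ≤ ∑ i ∈ s, f i := Finset.sum_nonneg hf
  have h2 : ((∑ i ∈ s, f i ^ t) ^ (1 / t)) ^ t ≤ ((s.card : ℝ) ^ (1 / t - 1) * ∑ i ∈ s, f i) ^ t :=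
    Real.rpow_le_rpow (Real.rpow_nonneg hS _) h ht0.le
  have h3 : ((∑ i ∈ s, f i ^ t) ^ (1 / t)) ^ t = ∑ i ∈ s, f i ^ t := by
    rw [← Real.rpow_mul hS, one_div, inv_mul_cancel₀ htne, Real.rpow_one]
  have h4 : (((s.card : ℝ) ^ (1 / t - 1)) * ∑ i ∈ s, f i) ^ t
      = (s.card : ℝ) ^ (1 - t) * (∑ i ∈ s, f i) ^ t := by
    rw [Real.mul_rpow (Real.rpow_nonneg (Nat.cast_nonneg _) _) hsum,
      ← Real.rpow_mul (Nat.cast_nonneg _)]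
    congr 2
    field_simp
  rw [h3, h4] at h2
  exact h2

lemma main_induction (hQ0 : ∀ x, 0 ≤ Q x) (ε α γ : ℝ) (hε0 : 0 < ε) (hε1 : ε ≤ 1)
    (hα0 : 0 < α) (hγ0 : 0 < γ) (hγ1 : γ < 1)
    (hstep : ((Fintype.card ((∀ j, X j) × (∀ j, A j)) : ℝ)) ^ γ * (1 - ε) ^ (1 - γ) ≤ 1)
    (hhard' : ∀ E : ∀ j, Set (Fin n → X j), α ≤ meas Q E →
      ∃ i, wini Q V g i E ≤ (1 - ε) * meas Q E) :
    ∀ (m : ℕ) (E : ∀ j, Set (Fin n → X j)), (gset E).card ≤ m →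
      wmeas Q V g E ≤ α ^ γ * (meas Q E) ^ (1 - γ) := by
  intro m
  induction m using Nat.strong_induction_on with
  | _ m ih =>
  intro E hcard
  rcases lt_or_ge (meas Q E) α with hlt | hge
  · rcases eq_or_lt_of_le (meas_nonneg Q hQ0 E) with h0 | hpos
    · rw [← h0, Real.zero_rpow (by linarith : (1:ℝ) - γ ≠ 0), mul_zero]
      exact le_trans (wmeas_le_meas Q V g hQ0 E) h0.symm.le
    · calc wmeas Q V g E ≤ meas Q E := wmeas_le_meas Q V g hQ0 E
        _ = meas Q E ^ γ * meas Q E ^ (1 - γ) := by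
            rw [← Real.rpow_add hpos, show γ + (1 - γ) = 1 by ring, Real.rpow_one]
        _ ≤ α ^ γ * meas Q E ^ (1 - γ) := by
            refine mul_le_mul_of_nonneg_right ?_ (Real.rpow_nonneg (meas_nonneg Q hQ0 E) _)
            exact Real.rpow_le_rpow (meas_nonneg Q hQ0 E) hlt.le hγ0.le
  · obtain ⟨i, hwi⟩ := hhard' E hge
    have hμpos : 0 < meas Q E := lt_of_lt_of_le hα0 hge
    set c : ℝ := (Fintype.card ((∀ j, X j) × (∀ j, A j)) : ℝ) with hc
    set P : Finset ((∀ j, X j) × (∀ j, A j)) :=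
      Finset.univ.filter (fun p => V p.1 p.2 = true) with hP
    have h5 : wmeas Q V g E = ∑ p ∈ P, wmeas Q V g (child g E i p.1 p.2) := by
      rw [hP, Finset.sum_filter, ← wmeas_eq Q V g i E]
    have h6 : ∑ p ∈ P, meas Q (child g E i p.1 p.2) = wini Q V g i E := by
      rw [hP, Finset.sum_filter, ← wini_eq Q V g i E]
    have hVmem : ∀ p ∈ P, V p.1 p.2 = true := fun p hp => (Finset.mem_filter.mp hp).2
    have hchlt : ∀ p ∈ P, (gset (child g E i p.1 p.2)).card < (gset E).card := by
      intro p hp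
      have hle : meas Q (child g E i p.1 p.2) ≤ (1 - ε) * meas Q E :=
        le_trans (meas_child_le_wini Q V g hQ0 i E (hVmem p hp)) hwi
      have hltm : meas Q (child g E i p.1 p.2) < meas Q E :=
        lt_of_le_of_lt hle (by nlinarith)
      have hne : gset (child g E i p.1 p.2) ≠ gset E := by
        intro hEq
        rw [meas_eq_gset, meas_eq_gset, hEq] at hltm
        exact lt_irrefl _ hltm
      exact Finset.card_lt_card ((gset_child_subset g i E p.1 p.2).ssubset_of_ne hne)
    have hIH : ∀ p ∈ P, wmeas Q V g (child g E i p.1 p.2)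
        ≤ α ^ γ * (meas Q (child g E i p.1 p.2)) ^ (1 - γ) := fun p hp =>
      ih _ (lt_of_lt_of_le (hchlt p hp) hcard) _ le_rfl
    have hcP : (P.card : ℝ) ≤ c := by
      rw [hc]
      exact_mod_cast Finset.card_filter_le Finset.univ _
    have hwini0 : 0 ≤ wini Q V g i E := wini_nonneg Q V g hQ0 i E
    calc wmeas Q V g E = ∑ p ∈ P, wmeas Q V g (child g E i p.1 p.2) := h5
      _ ≤ ∑ p ∈ P, α ^ γ * (meas Q (child g E i p.1 p.2)) ^ (1 - γ) :=
          Finset.sum_le_sum hIH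
      _ = α ^ γ * ∑ p ∈ P, (meas Q (child g E i p.1 p.2)) ^ (1 - γ) := by
          rw [Finset.mul_sum]
      _ ≤ α ^ γ * ((P.card : ℝ) ^ (1 - (1 - γ))
            * (∑ p ∈ P, meas Q (child g E i p.1 p.2)) ^ (1 - γ)) := by
          refine mul_le_mul_of_nonneg_left ?_ (Real.rpow_nonneg hα0.le γ)
          exact sum_rpow_le P _ (fun p _ => meas_nonneg Q hQ0 _) (by linarith) (by linarith)
      _ = α ^ γ * ((P.card : ℝ) ^ γ * (wini Q V g i E) ^ (1 - γ)) := by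
          rw [show (1 : ℝ) - (1 - γ) = γ by ring, h6]
      _ ≤ α ^ γ * (c ^ γ * ((1 - ε) * meas Q E) ^ (1 - γ)) := by
          refine mul_le_mul_of_nonneg_left ?_ (Real.rpow_nonneg hα0.le γ)
          refine mul_le_mul (Real.rpow_le_rpow (Nat.cast_nonneg _) hcP hγ0.le)
            (Real.rpow_le_rpow hwini0 hwi (by linarith))
            (Real.rpow_nonneg hwini0 _) (Real.rpow_nonneg (le_trans (Nat.cast_nonneg _) hcP) _)
      _ = α ^ γ * ((c ^ γ * (1 - ε) ^ (1 - γ)) * meas Q E ^ (1 - γ)) := by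
          rw [Real.mul_rpow (by linarith : (0:ℝ) ≤ 1 - ε) hμpos.le]
          ring
      _ ≤ α ^ γ * (1 * meas Q E ^ (1 - γ)) := by
          refine mul_le_mul_of_nonneg_left ?_ (Real.rpow_nonneg hα0.le γ)
          exact mul_le_mul_of_nonneg_right hstep (Real.rpow_nonneg hμpos.le _)
      _ = α ^ γ * meas Q E ^ (1 - γ) := by ring

lemma meas_univ (Q : (∀ j, X j) → ℝ) (hQ1 : ∑ x, Q x = 1) :
    meas (n := n) Q (fun _ => Set.univ) = 1 := by
  have h1 : meas (n := n) Q (fun _ => Set.univ)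
      = ∑ x : Fin n → ∀ j, X j, ∏ i, Q (x i) := by
    refine Finset.sum_congr rfl fun x _ => ?_
    rw [if_pos]
    intro j
    exact Set.mem_univ _
  rw [h1, ← Fintype.piFinset_univ, ← Finset.prod_univ_sum]
  rw [Finset.prod_congr rfl fun (i : Fin n) _ => hQ1, Finset.prod_const_one]

end ParRepAux

open ParRepAux

open Classical in
/-- inductive parallel repetition criterion: Let `𝒢 = (𝒳, 𝒜, Q, V)` be a
`k`-player game and fix a strategy `g` for the `n`-fold repetition `𝒢^{⊗n}` (in
particular, this applies to an optimal strategy, so that the winning probability below is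
`val(𝒢^{⊗n})`).  Suppose `ε, α ∈ (0,1]` with `α ≥ 2^{-n}` are such that for every product
event `E = E¹ × ⋯ × E^k` with `Pr_{Q^{⊗n}}[E] ≥ α` there is a coordinate `i ∈ [n]` with
`Pr[Winᵢ | E] ≤ 1 - ε`.  Then the probability that the strategy wins all `n` coordinates
is at most `(1 - ε/2)^{log₂(1/α) / (2 log₂(4|𝒳||𝒜|))}`. -/
theorem parallel_repetition_of_hard_coordinates
    {k n : ℕ} (hn : 0 < n)
    {X A : Fin k → Type*} [∀ j, Fintype (X j)] [∀ j, Fintype (A j)]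
    [∀ j, Nonempty (X j)] [∀ j, Nonempty (A j)]
    (Q : (∀ j, X j) → ℝ) (hQ0 : ∀ x, 0 ≤ Q x) (hQ1 : ∑ x, Q x = 1)
    (V : (∀ j, X j) → (∀ j, A j) → Bool)
    (g : ∀ j, (Fin n → X j) → Fin n → A j)
    (ε α : ℝ) (hε0 : 0 < ε) (hε1 : ε ≤ 1) (hα0 : 0 < α) (hα1 : α ≤ 1)
    (hαn : (1 / 2 : ℝ) ^ n ≤ α)
    (hhard : ∀ E : ∀ j, Set (Fin n → X j),
      α ≤ (∑ x : Fin n → ∀ j, X j,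
            if ∀ j, (fun i => x i j) ∈ E j then ∏ i, Q (x i) else 0) →
      ∃ i : Fin n,
        (∑ x : Fin n → ∀ j, X j,
            if (∀ j, (fun i' => x i' j) ∈ E j) ∧
                V (x i) (fun j => g j (fun i' => x i' j) i) = true
              then ∏ i', Q (x i') else 0)
          / (∑ x : Fin n → ∀ j, X j,
              if ∀ j, (fun i' => x i' j) ∈ E j then ∏ i', Q (x i') else 0)
          ≤ 1 - ε) :
    (∑ x : Fin n → ∀ j, X j,
        if ∀ i, V (x i) (fun j => g j (fun i' => x i' j) i) = true
          then ∏ i, Q (x i) else 0)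
      ≤ (1 - ε / 2) ^ (Real.logb 2 (1 / α) /
          (2 * Real.logb 2 (4 * (Fintype.card (∀ j, X j)) *
            (Fintype.card (∀ j, A j))))) := by
  have h12 : (1 : ℝ) < 2 := one_lt_two
  have h02 : (0 : ℝ) < 2 := two_pos
  have hne2 : (2 : ℝ) ≠ 1 := by norm_num
  set cX : ℕ := Fintype.card (∀ j, X j) with hcX
  set cA : ℕ := Fintype.card (∀ j, A j) with hcA
  have hcX1 : 1 ≤ cX := Fintype.card_pos
  have hcA1 : 1 ≤ cA := Fintype.card_pos
  set c : ℝ := (cX : ℝ) * (cA : ℝ) with hc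
  have hc1 : (1 : ℝ) ≤ c := by
    rw [hc]
    have h1 : (1 : ℝ) ≤ (cX : ℝ) := by exact_mod_cast hcX1
    have h2 : (1 : ℝ) ≤ (cA : ℝ) := by exact_mod_cast hcA1
    nlinarith
  have hc0 : (0 : ℝ) < c := by linarith
  set D : ℝ := Real.logb 2 (4 * c) with hD
  have hD2 : (2 : ℝ) ≤ D := by
    rw [hD, Real.le_logb_iff_rpow_le h12 (by linarith : (0:ℝ) < 4 * c)]
    have hnat : ((2:ℕ) : ℝ) = (2 : ℝ) := by norm_num
    have h4 : (2:ℝ) ^ (2:ℝ) = 4 := by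
      rw [← hnat, Real.rpow_natCast]
      norm_num
    rw [h4]
    linarith
  have hD0 : 0 < D := by linarith
  have hhalf : (0 : ℝ) < 1 - ε / 2 := by linarith
  have hhalflt : 1 - ε / 2 < 1 := by linarith
  set lam : ℝ := -Real.logb 2 (1 - ε / 2) with hlam
  have hlam0 : 0 < lam := by
    have := Real.logb_neg h12 hhalf hhalflt
    rw [hlam]; linarith
  have hlam1 : lam ≤ 1 := by
    have hh : (-1 : ℝ) ≤ Real.logb 2 (1 - ε / 2) := by
      rw [Real.le_logb_iff_rpow_le h12 hhalf,
        Real.rpow_neg (by norm_num : (0:ℝ) ≤ 2), Real.rpow_one]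
      rw [show ((2:ℝ))⁻¹ = 1/2 by norm_num]
      linarith
    rw [hlam]; linarith
  set γ : ℝ := lam / (2 * D) with hγ
  clear_value cX cA c D lam γ
  have hγ0 : 0 < γ := by
    rw [hγ]; positivity
  have hγ4 : γ ≤ 1 / 4 := by
    rw [hγ, div_le_iff₀ (by linarith : (0:ℝ) < 2 * D)]
    linarith
  have hγ1 : γ < 1 := by linarith
  have hγD : γ * (2 * D) = lam := by
    rw [hγ]
    field_simp
  have hstep : ((Fintype.card ((∀ j, X j) × (∀ j, A j)) : ℝ)) ^ γ * (1 - ε) ^ (1 - γ) ≤ 1 := by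
    have hcard : ((Fintype.card ((∀ j, X j) × (∀ j, A j)) : ℝ)) = c := by
      rw [Fintype.card_prod, hc, hcX, hcA]
      push_cast
      rfl
    rw [hcard]
    have hLc0 : 0 ≤ Real.logb 2 c := Real.logb_nonneg h12 hc1
    have hLcD : Real.logb 2 c ≤ D := by
      rw [hD]
      exact Real.logb_le_logb_of_le h12 hc0 (by linarith)
    have h1mε : (0:ℝ) ≤ 1 - ε := by linarith
    have hsq : (1 - ε) ≤ (1 - ε / 2) ^ (2:ℕ) := by nlinarith
    have step1 : (1 - ε) ^ (1 - γ) ≤ (1 - ε / 2) ^ ((2:ℝ) * (1 - γ)) := by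
      calc (1 - ε) ^ (1 - γ) ≤ ((1 - ε / 2) ^ (2:ℕ)) ^ (1 - γ) :=
            Real.rpow_le_rpow h1mε hsq (by linarith)
        _ = (1 - ε / 2) ^ ((2:ℝ) * (1 - γ)) := by
            rw [← Real.rpow_natCast (1 - ε / 2) 2, ← Real.rpow_mul hhalf.le]
            norm_num
    have step2 : c ^ γ = (2:ℝ) ^ (Real.logb 2 c * γ) := by
      rw [Real.rpow_mul (by norm_num : (0:ℝ) ≤ 2), Real.rpow_logb h02 hne2 hc0]
    have step3 : (1 - ε / 2) ^ ((2:ℝ) * (1 - γ))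
        = (2:ℝ) ^ (Real.logb 2 (1 - ε / 2) * ((2:ℝ) * (1 - γ))) := by
      rw [Real.rpow_mul (by norm_num : (0:ℝ) ≤ 2), Real.rpow_logb h02 hne2 hhalf]
    have hcγ0 : 0 ≤ c ^ γ := Real.rpow_nonneg hc0.le _
    calc c ^ γ * (1 - ε) ^ (1 - γ)
        ≤ c ^ γ * (1 - ε / 2) ^ ((2:ℝ) * (1 - γ)) :=
          mul_le_mul_of_nonneg_left step1 hcγ0
      _ = (2:ℝ) ^ (Real.logb 2 c * γ + Real.logb 2 (1 - ε / 2) * ((2:ℝ) * (1 - γ))) := by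
          rw [step2, step3, ← Real.rpow_add h02]
      _ ≤ 1 := by
          refine Real.rpow_le_one_of_one_le_of_nonpos h12.le ?_
          have hDγ : D * γ = lam / 2 := by
            rw [hγ]
            field_simp
          have e1 : Real.logb 2 c * γ ≤ lam / 2 := by
            calc Real.logb 2 c * γ ≤ D * γ :=
                  mul_le_mul_of_nonneg_right hLcD hγ0.le
              _ = lam / 2 := hDγ
          have e2 : Real.logb 2 (1 - ε / 2) * ((2:ℝ) * (1 - γ)) = -(lam * (2 * (1 - γ))) := by
            rw [hlam]; ring
          rw [e2]
          nlinarith [e1, hlam0, hγ4]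
  have hmeas_eq : ∀ E : ∀ j, Set (Fin n → X j), meas Q E
      = ∑ x : Fin n → ∀ j, X j,
          if ∀ j, (fun i => x i j) ∈ E j then ∏ i, Q (x i) else 0 := by
    intro E
    refine Finset.sum_congr rfl fun x _ => ?_
    congr! 1
  have hwini_eq : ∀ (i : Fin n) (E : ∀ j, Set (Fin n → X j)), wini Q V g i E
      = ∑ x : Fin n → ∀ j, X j,
          if (∀ j, (fun i' => x i' j) ∈ E j) ∧
              V (x i) (fun j => g j (fun i' => x i' j) i) = true
            then ∏ i', Q (x i') else 0 := by
    intro i E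
    refine Finset.sum_congr rfl fun x _ => ?_
    congr! 1
  have hhard' : ∀ E : ∀ j, Set (Fin n → X j), α ≤ meas Q E →
      ∃ i, wini Q V g i E ≤ (1 - ε) * meas Q E := by
    intro E hE
    rw [hmeas_eq E] at hE
    obtain ⟨i, hi⟩ := hhard E hE
    refine ⟨i, ?_⟩
    rw [← hmeas_eq E, ← hwini_eq i E] at hi
    have hμpos : 0 < meas Q E := by
      rw [hmeas_eq E]; exact lt_of_lt_of_le hα0 hE
    exact (div_le_iff₀ hμpos).mp hi
  have hmain := main_induction Q V g hQ0 ε α γ hε0 hε1 hα0 hγ0 hγ1 hstep hhard'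
    ((gset (fun _ => Set.univ : ∀ j, Set (Fin n → X j))).card)
    (fun _ => Set.univ : ∀ j, Set (Fin n → X j)) le_rfl
  rw [meas_univ Q hQ1, Real.one_rpow, mul_one] at hmain
  have hLHS : (∑ x : Fin n → ∀ j, X j,
        if ∀ i, V (x i) (fun j => g j (fun i' => x i' j) i) = true
          then ∏ i, Q (x i) else 0)
      = wmeas Q V g (fun _ => Set.univ : ∀ j, Set (Fin n → X j)) := by
    unfold ParRepAux.wmeas
    refine Finset.sum_congr rfl fun x _ => ?_
    congr! 1
    constructor
    · intro h
      exact ⟨fun j => Set.mem_univ _, h⟩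
    · rintro ⟨-, h⟩
      exact h
  have hRHS : α ^ γ = (1 - ε / 2) ^ (Real.logb 2 (1 / α) /
      (2 * Real.logb 2 (4 * (cX:ℝ) * (cA:ℝ)))) := by
    have h4c : (4:ℝ) * (cX:ℝ) * (cA:ℝ) = 4 * c := by rw [hc]; ring
    rw [h4c, ← hD]
    rw [show α ^ γ = (2:ℝ) ^ (Real.logb 2 α * γ) from by
        rw [Real.rpow_mul (by norm_num : (0:ℝ) ≤ 2), Real.rpow_logb h02 hne2 hα0],
      show (1 - ε/2) ^ (Real.logb 2 (1/α) / (2 * D))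
          = (2:ℝ) ^ (Real.logb 2 (1 - ε/2) * (Real.logb 2 (1/α) / (2*D))) from by
        rw [Real.rpow_mul (by norm_num : (0:ℝ) ≤ 2), Real.rpow_logb h02 hne2 hhalf]]
    congr 1
    rw [one_div, Real.logb_inv, hγ, hlam]
    ring
  rw [hLHS, ← hRHS]
  exact hmain
end
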